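/- arXiv:math/0401017 — 3 statements merged into one kernel-verified Lean document; each statement's English description precedes it below -/
import Mathlib

section
/- Let p : Ω → Λ be a universal covering of k-graphs, x a vertex of Λ, v a vertex of Ω with p(v) = x, and H a subgroup of π(Λ,x). Let H act on (Ω,p) by covering automorphisms via the canonical action (for λ ∈ Ω and c ∈ H, λc is the unique element of Ω with p(λc) = p(λ) and s(λc) = acv, where a ∈ 𝒢(Λ) satisfies s(λ) = av). Then this action is free, the associated covering q : Ω/H → Λ (λH ↦ p(λ)) is connected, and H = q_*π(Ω/H, vH). Moreover, every connected covering of Λ is isomorphic to one of the coverings Ω/H → Λ for some subgroup H of π(Λ,x). -/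
/-!
Arrows-only formalization of `k`-graphs (higher-rank graphs), their coverings,
fundamental groupoids, and groupoid actions, following Pask–Quigg–Raeburn,
"Coverings of k-graphs".

A small category is encoded by its set of arrows `A` together with
source/range maps `src rng : A → A` (whose common image is the set of
identities = vertices) and a (guarded) total composition `comp : A → A → A`,
where `comp f g` is the composite "f after g", meaningful when `src f = rng g`.
A `k`-graph additionally has a degree map `deg : A → (Fin k → ℕ)` which is
functorial and satisfies the unique factorization property.
-/

namespace KGraphCovering

/-- A `k`-graph in arrows-only form. -/
structure KGraphStruct (k : ℕ) (A : Type) : Type where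
  src : A → A
  rng : A → A
  comp : A → A → A
  deg : A → (Fin k → ℕ)
  src_src : ∀ f, src (src f) = src f
  rng_src : ∀ f, rng (src f) = src f
  src_rng : ∀ f, src (rng f) = rng f
  rng_rng : ∀ f, rng (rng f) = rng f
  comp_src_id : ∀ f, comp f (src f) = f
  rng_comp_id : ∀ f, comp (rng f) f = f
  src_comp : ∀ f g, src f = rng g → src (comp f g) = src g
  rng_comp : ∀ f g, src f = rng g → rng (comp f g) = rng f
  assoc : ∀ f g h, src f = rng g → src g = rng h →
    comp (comp f g) h = comp f (comp g h)
  deg_comp : ∀ f g, src f = rng g → deg (comp f g) = deg f + deg g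
  deg_src : ∀ f, deg (src f) = 0
  factor : ∀ f m n, deg f = m + n →
    ∃! q : A × A, src q.1 = rng q.2 ∧ deg q.1 = m ∧ deg q.2 = n ∧ comp q.1 q.2 = f

namespace KGraphStruct

variable {k : ℕ} {A : Type}

/-- The vertices (objects) are the identity arrows. -/
def IsVertex (S : KGraphStruct k A) (v : A) : Prop := S.src v = v

/-- A `k`-graph is connected if the equivalence relation generated by
"there is a morphism from `v` to `u`" relates all pairs of vertices. -/
def Connected (S : KGraphStruct k A) : Prop :=
  ∀ u v, S.IsVertex u → S.IsVertex v →
    Relation.EqvGen (fun a b => ∃ f, S.rng f = a ∧ S.src f = b) u v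

end KGraphStruct

/-- A groupoid in arrows-only form. -/
structure GroupoidStruct (B : Type) : Type where
  src : B → B
  rng : B → B
  comp : B → B → B
  inv : B → B
  src_src : ∀ f, src (src f) = src f
  rng_src : ∀ f, rng (src f) = src f
  src_rng : ∀ f, src (rng f) = rng f
  rng_rng : ∀ f, rng (rng f) = rng f
  comp_src_id : ∀ f, comp f (src f) = f
  rng_comp_id : ∀ f, comp (rng f) f = f
  src_comp : ∀ f g, src f = rng g → src (comp f g) = src g
  rng_comp : ∀ f g, src f = rng g → rng (comp f g) = rng f
  assoc : ∀ f g h, src f = rng g → src g = rng h →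
    comp (comp f g) h = comp f (comp g h)
  src_inv : ∀ f, src (inv f) = rng f
  rng_inv : ∀ f, rng (inv f) = src f
  inv_comp_self : ∀ f, comp (inv f) f = src f
  comp_inv_self : ∀ f, comp f (inv f) = rng f

namespace GroupoidStruct

variable {B : Type}

/-- The vertices (objects) of a groupoid are the identity arrows. -/
def IsVertex (G : GroupoidStruct B) (v : B) : Prop := G.src v = v

/-- A subgroup of the isotropy group `x𝒢x`, as a set of arrows. -/
def IsSubgroupAt (G : GroupoidStruct B) (x : B) (H : Set B) : Prop :=
  (∀ a ∈ H, G.src a = x ∧ G.rng a = x) ∧ x ∈ H ∧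
  (∀ a ∈ H, ∀ b ∈ H, G.comp a b ∈ H) ∧ (∀ a ∈ H, G.inv a ∈ H)

/-- `K` is a conjugate of `H` in the isotropy group at `x`. -/
def ConjAt (G : GroupoidStruct B) (x : B) (H K : Set B) : Prop :=
  ∃ g, G.src g = x ∧ G.rng g = x ∧
    K = (fun a => G.comp (G.comp g a) (G.inv g)) '' H

/-- `H` is a normal subset of the isotropy group at `x`. -/
def IsNormalAt (G : GroupoidStruct B) (x : B) (H : Set B) : Prop :=
  ∀ g, G.src g = x → G.rng g = x → ∀ a ∈ H, G.comp (G.comp g a) (G.inv g) ∈ H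

/-- The normalizer of `H` in the isotropy group at `x`. -/
def normalizerAt (G : GroupoidStruct B) (x : B) (H : Set B) : Set B :=
  {g | G.src g = x ∧ G.rng g = x ∧
    (fun a => G.comp (G.comp g a) (G.inv g)) '' H = H}

end GroupoidStruct

/-- `f` is a morphism of `k`-graphs (a degree-preserving functor). -/
def IsKGraphHomFun {k : ℕ} {A A' : Type} (S : KGraphStruct k A)
    (T : KGraphStruct k A') (f : A → A') : Prop :=
  (∀ a, f (S.src a) = T.src (f a)) ∧
  (∀ a, f (S.rng a) = T.rng (f a)) ∧
  (∀ a b, S.src a = S.rng b → f (S.comp a b) = T.comp (f a) (f b)) ∧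
  (∀ a, T.deg (f a) = S.deg a)

/-- `f` is a functor from a `k`-graph to a groupoid. -/
def IsFunctorToGpdFun {k : ℕ} {A B : Type} (S : KGraphStruct k A)
    (G : GroupoidStruct B) (f : A → B) : Prop :=
  (∀ a, f (S.src a) = G.src (f a)) ∧
  (∀ a, f (S.rng a) = G.rng (f a)) ∧
  (∀ a b, S.src a = S.rng b → f (S.comp a b) = G.comp (f a) (f b))

/-- `f` is a morphism of groupoids (a functor). -/
def IsGpdHomFun {B C : Type} (G : GroupoidStruct B) (H : GroupoidStruct C)
    (f : B → C) : Prop :=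
  (∀ a, f (G.src a) = H.src (f a)) ∧
  (∀ a, f (G.rng a) = H.rng (f a)) ∧
  (∀ a b, G.src a = G.rng b → f (G.comp a b) = H.comp (f a) (f b))

/-- `p : Ω → Λ` is a covering of `k`-graphs: a surjective `k`-graph morphism
which maps `Ωv` bijectively onto `Λp(v)` and `vΩ` bijectively onto `p(v)Λ`
for every vertex `v` of `Ω`. -/
structure IsCovering {k : ℕ} {A A' : Type} (S : KGraphStruct k A')
    (T : KGraphStruct k A) (p : A' → A) : Prop where
  hom : IsKGraphHomFun S T p
  surj : Function.Surjective p
  src_inj : ∀ a b, S.src a = S.src b → p a = p b → a = b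
  src_lift : ∀ v, S.IsVertex v → ∀ g, T.src g = p v → ∃ a, S.src a = v ∧ p a = g
  rng_inj : ∀ a b, S.rng a = S.rng b → p a = p b → a = b
  rng_lift : ∀ v, S.IsVertex v → ∀ g, T.rng g = p v → ∃ a, S.rng a = v ∧ p a = g

/-- A fundamental groupoid of a `k`-graph `S`: a groupoid `G` whose object
set is identified with the vertex set of `S` via the canonical functor `i`
(which is bijective on objects), with the universal property that every
functor from `S` to a groupoid factors uniquely through `i`. -/
structure FundamentalGroupoid {k : ℕ} {A : Type} (S : KGraphStruct k A) :
    Type 1 where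
  B : Type
  G : GroupoidStruct B
  i : A → B
  i_hom : IsFunctorToGpdFun S G i
  obj_bij : ∀ w, G.IsVertex w → ∃! v, S.IsVertex v ∧ i v = w
  univ : ∀ {C : Type} (H : GroupoidStruct C) (F : A → C),
    IsFunctorToGpdFun S H F →
    ∃! F' : B → C, IsGpdHomFun G H F' ∧ ∀ a, F' (i a) = F a

/-- The fundamental group `π(Λ,x)` at a vertex `x`, as the isotropy of the
fundamental groupoid at `i x`. -/
def FundamentalGroupoid.pi1 {k : ℕ} {A : Type} {S : KGraphStruct k A}
    (F : FundamentalGroupoid S) (x : A) : Set F.B :=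
  {a | F.G.src a = F.i x ∧ F.G.rng a = F.i x}

/-- An automorphism of the covering `p : Ω → Λ`. -/
def IsCoveringAut {k : ℕ} {A A' : Type} (Ω : KGraphStruct k A')
    (Λ : KGraphStruct k A) (p : A' → A) (φ : A' → A') : Prop :=
  Function.Bijective φ ∧ IsKGraphHomFun Ω Ω φ ∧ ∀ a, p (φ a) = p a

/-- The action of the fundamental groupoid `F = 𝒢(Λ)` on the vertex set of a
covering `p : Ω → Λ`, determined by `i(p(λ)) ⬝ s(λ) = r(λ)`.  The fiber of a
vertex `w` of `Ω` is over the object `F.i (p w)`. -/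
structure CorrespondingAction {k : ℕ} {A A' : Type} (Ω : KGraphStruct k A')
    (Λ : KGraphStruct k A) (F : FundamentalGroupoid Λ) (p : A' → A)
    (act : F.B → A' → A') : Prop where
  act_vertex : ∀ a w, Ω.IsVertex w → F.G.src a = F.i (p w) →
    Ω.IsVertex (act a w) ∧ F.i (p (act a w)) = F.G.rng a
  act_id : ∀ w, Ω.IsVertex w → act (F.i (p w)) w = w
  act_comp : ∀ a b w, Ω.IsVertex w → F.G.src b = F.i (p w) →
    F.G.src a = F.G.rng b → act (F.G.comp a b) w = act a (act b w)
  act_cov : ∀ lam, act (F.i (p lam)) (Ω.src lam) = Ω.rng lam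

/-- An action of a groupoid `G` on a set `V`, presented by an anchor map
`fib : V → B` (landing in vertices) and a guarded action map. -/
structure GpdActionStruct {B : Type} (G : GroupoidStruct B) (V : Type) :
    Type where
  fib : V → B
  act : B → V → V
  fib_vertex : ∀ v, G.src (fib v) = fib v
  act_fib : ∀ a v, G.src a = fib v → fib (act a v) = G.rng a
  act_id : ∀ v, act (fib v) v = v
  act_comp : ∀ a b v, G.src b = fib v → G.src a = G.rng b →
    act (G.comp a b) v = act a (act b v)

namespace GpdActionStruct

variable {B V W : Type} {G : GroupoidStruct B}

/-- Transitivity of a groupoid action. -/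
def Transitive (ρ : GpdActionStruct G V) : Prop :=
  ∀ u v : V, ∃ a, G.src a = ρ.fib v ∧ ρ.act a v = u

/-- The stability group of the action at `v`. -/
def stab (ρ : GpdActionStruct G V) (v : V) : Set B :=
  {a | G.src a = ρ.fib v ∧ G.rng a = ρ.fib v ∧ ρ.act a v = v}

/-- Freeness of a groupoid action: all stability groups are trivial. -/
def Free (ρ : GpdActionStruct G V) : Prop :=
  ∀ (v : V) (a : B), a ∈ ρ.stab v → a = ρ.fib v

end GpdActionStruct

/-- A morphism of actions of the groupoid `G`: a fiber-preserving
equivariant map. -/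
def IsActionHom {B V W : Type} {G : GroupoidStruct B}
    (ρ : GpdActionStruct G V) (σ : GpdActionStruct G W) (φ : V → W) : Prop :=
  (∀ v, σ.fib (φ v) = ρ.fib v) ∧
  ∀ a v, G.src a = ρ.fib v → φ (ρ.act a v) = σ.act a (φ v)

/-- An automorphism of an action of the groupoid `G`. -/
def IsActionAut {B V : Type} {G : GroupoidStruct B}
    (ρ : GpdActionStruct G V) (φ : V → V) : Prop :=
  Function.Bijective φ ∧ IsActionHom ρ ρ φ

/-- A universal covering: a connected covering admitting a morphism of
coverings to every connected covering of the base. -/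
def IsUniversalCovering {k : ℕ} {A A' : Type} (Ω : KGraphStruct k A')
    (Λ : KGraphStruct k A) (p : A' → A) : Prop :=
  IsCovering Ω Λ p ∧ Ω.Connected ∧
  ∀ (A'' : Type) (Sg : KGraphStruct k A'') (q : A'' → A),
    IsCovering Sg Λ q → Sg.Connected →
    ∃ φ : A' → A'', IsKGraphHomFun Ω Sg φ ∧ ∀ a, q (φ a) = p a

end KGraphCovering

namespace KGraphCovering

/-- The data of a subgroup `H` of `π(Λ,x)` acting on the right of a universal
covering `p : Ω → Λ` by the canonical action (`λ·c` is the unique element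
with `p(λc) = p(λ)` and `s(λc) = a c v` whenever `s(λ) = a v`), together with
the associated quotient `k`-graph `Ω/H` (a `k`-graph `Q` with a surjective
morphism `qmap` whose fibers are the `H`-orbits) and the induced covering
`qbar : Ω/H → Λ` (`λH ↦ p(λ)`). -/
structure SubgroupQuotientData {k : ℕ} {A A' : Type}
    (Λ : KGraphStruct k A) (Ω : KGraphStruct k A')
    (FΛ : FundamentalGroupoid Λ) (p : A' → A)
    (act : FΛ.B → A' → A') (x : A) (v : A') : Type 1 where
  H : Set FΛ.B
  subgroup : FΛ.G.IsSubgroupAt (FΛ.i x) H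
  ract : A' → FΛ.B → A'
  ract_spec : ∀ lam c a, c ∈ H → FΛ.G.src a = FΛ.i x → act a v = Ω.src lam →
    p (ract lam c) = p lam ∧ Ω.src (ract lam c) = act (FΛ.G.comp a c) v
  Qc : Type
  Q : KGraphStruct k Qc
  qmap : A' → Qc
  qmap_hom : IsKGraphHomFun Ω Q qmap
  qmap_surj : Function.Surjective qmap
  qmap_fib : ∀ a b, qmap a = qmap b ↔ ∃ c ∈ H, ract a c = b
  qbar : Qc → A
  qbar_hom : IsKGraphHomFun Q Λ qbar
  qbar_comm : ∀ a, qbar (qmap a) = p a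

/-!
By uniqueness in its universal property, `𝒢(Λ)` is generated by the image of `Λ`, so facts
about its action on the vertices of a covering reduce to the generators `i λ`, which move the
source of a lift of `λ` to its range.

The universal covering maps to the standard covering, whose vertices are the arrows of `𝒢(Λ)`
out of `x` and on which `𝒢(Λ)` acts by left multiplication; hence `𝒢(Λ)` acts freely on the
vertices of `Ω`. This makes the right action of `H` well defined and free, with the fibres of
`Ω → Ω/H` as orbits, so `Ω/H → Λ` is a covering. An arrow of `𝒢(Ω/H)` at `vH` maps to some
`c` with `cv ∈ vH`, that is `c ∈ H`; lifting arrows of `𝒢(Λ)` along `Ω → Ω/H` gives the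
converse. Finally, a connected covering `Σ` receives a covering morphism `ψ` from `Ω`; the
kernel of `ψ` on vertices is invariant under `𝒢(Λ)`, so `Σ` is the quotient of `Ω` by the
stabiliser of `ψ v`.
-/

namespace GroupoidStruct

variable {B : Type} (G : GroupoidStruct B)

theorem comp_rng_eq {c d : B} (h : G.rng c = d) : G.comp d c = c := by
  rw [← h, G.rng_comp_id]

theorem comp_src_eq {c d : B} (h : G.src c = d) : G.comp c d = c := by
  rw [← h, G.comp_src_id]

theorem inv_comp_cancel_left {c d : B} (h : G.src c = G.rng d) :
    G.comp (G.inv c) (G.comp c d) = d := by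
  rw [← G.assoc _ _ _ (G.src_inv c) h, G.inv_comp_self, h, G.rng_comp_id]

theorem comp_inv_cancel_left {c d : B} (h : G.rng c = G.rng d) :
    G.comp c (G.comp (G.inv c) d) = d := by
  rw [← G.assoc c (G.inv c) d (G.rng_inv c).symm (by rw [G.src_inv, h]),
    G.comp_inv_self, h, G.rng_comp_id]

theorem comp_left_cancel {c d d' : B} (h : G.src c = G.rng d) (h' : G.src c = G.rng d')
    (hcd : G.comp c d = G.comp c d') : d = d' := by
  rw [← G.inv_comp_cancel_left h, hcd, G.inv_comp_cancel_left h']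

theorem inv_eq_of_comp_eq_rng {c d : B} (h : G.src c = G.rng d) (hcd : G.comp c d = G.rng c) :
    G.inv c = d := by
  rw [← G.comp_src_eq (G.src_inv c), ← hcd, ← G.assoc _ _ _ (G.src_inv c) h,
    G.inv_comp_self, h, G.rng_comp_id]

theorem comp_right_cancel {c c' d : B} (h : G.src c = G.rng d) (h' : G.src c' = G.rng d)
    (hcd : G.comp c d = G.comp c' d) : c = c' := by
  have cancel : ∀ e, G.src e = G.rng d → G.comp (G.comp e d) (G.inv d) = e := fun e he => by
    rw [G.assoc _ _ _ he (G.rng_inv d).symm, G.comp_inv_self, ← he, G.comp_src_id]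
  rw [← cancel c h, hcd, cancel c' h']

section Restrict

variable (P : B → Prop) (hinv : ∀ b, P b → P (G.inv b))
  (hcomp : ∀ b c, G.src b = G.rng c → P b → P c → P (G.comp b c))
include hinv hcomp

theorem src_mem_of_closed {b : B} (hb : P b) : P (G.src b) := by
  rw [← G.inv_comp_self]; exact hcomp _ _ (G.src_inv b) (hinv b hb) hb

theorem rng_mem_of_closed {b : B} (hb : P b) : P (G.rng b) := by
  rw [← G.comp_inv_self]; exact hcomp _ _ (G.rng_inv b).symm hb (hinv b hb)

open Classical in
/-- The composition of a non-composable pair is junk. -/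
noncomputable def restrict : GroupoidStruct {b // P b} where
  src b := ⟨G.src b.1, G.src_mem_of_closed P hinv hcomp b.2⟩
  rng b := ⟨G.rng b.1, G.rng_mem_of_closed P hinv hcomp b.2⟩
  inv b := ⟨G.inv b.1, hinv _ b.2⟩
  comp b c := if h : G.src b.1 = G.rng c.1 then ⟨G.comp b.1 c.1, hcomp _ _ h b.2 c.2⟩ else b
  src_src b := Subtype.ext (G.src_src b.1)
  rng_src b := Subtype.ext (G.rng_src b.1)
  src_rng b := Subtype.ext (G.src_rng b.1)
  rng_rng b := Subtype.ext (G.rng_rng b.1)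
  comp_src_id b := Subtype.ext <| by simp [G.rng_src, G.comp_src_id]
  rng_comp_id b := Subtype.ext <| by simp [G.src_rng, G.rng_comp_id]
  src_comp b c h := Subtype.ext <| by
    have h : G.src b.1 = G.rng c.1 := congrArg Subtype.val h
    simp [h, G.src_comp _ _ h]
  rng_comp b c h := Subtype.ext <| by
    have h : G.src b.1 = G.rng c.1 := congrArg Subtype.val h
    simp [h, G.rng_comp _ _ h]
  assoc b c d hbc hcd := Subtype.ext <| by
    have hbc : G.src b.1 = G.rng c.1 := congrArg Subtype.val hbc
    have hcd : G.src c.1 = G.rng d.1 := congrArg Subtype.val hcd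
    simp [hbc, hcd, G.src_comp _ _ hbc, G.rng_comp _ _ hcd, G.assoc _ _ _ hbc hcd]
  src_inv b := Subtype.ext (G.src_inv b.1)
  rng_inv b := Subtype.ext (G.rng_inv b.1)
  inv_comp_self b := Subtype.ext <| by simp [G.src_inv, G.inv_comp_self]
  comp_inv_self b := Subtype.ext <| by simp [G.rng_inv, G.comp_inv_self]

theorem isGpdHomFun_restrict_val : IsGpdHomFun (G.restrict P hinv hcomp) G Subtype.val :=
  ⟨fun _ => rfl, fun _ => rfl, fun b c h => by
    have h : G.src b.1 = G.rng c.1 := congrArg Subtype.val h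
    simp [restrict, h]⟩

end Restrict

end GroupoidStruct

namespace KGraphStruct

variable {k : ℕ} {A : Type} {S : KGraphStruct k A}

theorem IsVertex.rng_eq {u : A} (hu : S.IsVertex u) : S.rng u = u := by
  rw [← hu, S.rng_src, hu]

theorem isVertex_src (f : A) : S.IsVertex (S.src f) := S.src_src f

theorem isVertex_rng (f : A) : S.IsVertex (S.rng f) := S.src_rng f

theorem Connected.induction (hS : S.Connected) (E : A → A → Prop)
    (refl : ∀ u, S.IsVertex u → E u u)
    (symm : ∀ u w, S.IsVertex u → S.IsVertex w → E u w → E w u)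
    (trans : ∀ u w z, S.IsVertex u → S.IsVertex w → S.IsVertex z → E u w → E w z → E u z)
    (edge : ∀ f, E (S.rng f) (S.src f)) {u w : A} (hu : S.IsVertex u) (hw : S.IsVertex w) :
    E u w := by
  suffices key : ∀ u w, Relation.EqvGen (fun a b => ∃ f, S.rng f = a ∧ S.src f = b) u w →
      (S.IsVertex u ↔ S.IsVertex w) ∧ (S.IsVertex u → E u w) from
    (key u w (hS u w hu hw)).2 hu
  intro u w h
  induction h with
  | rel u w huw =>
    obtain ⟨f, rfl, rfl⟩ := huw
    exact ⟨iff_of_true (isVertex_rng f) (isVertex_src f), fun _ => edge f⟩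
  | refl u => exact ⟨Iff.rfl, refl u⟩
  | symm u w _ ih => exact ⟨ih.1.symm, fun hw => symm u w (ih.1.2 hw) hw (ih.2 (ih.1.2 hw))⟩
  | trans u w z _ _ ih₁ ih₂ =>
    refine ⟨ih₁.1.trans ih₂.1, fun hu => ?_⟩
    have hw := ih₁.1.1 hu
    exact trans u w z hu hw (ih₂.1.1 hw) (ih₁.2 hu) (ih₂.2 hw)

end KGraphStruct

theorem IsGpdHomFun.comp {B C E : Type} {G : GroupoidStruct B} {H : GroupoidStruct C}
    {K : GroupoidStruct E} {g : C → E} {f : B → C} (hg : IsGpdHomFun H K g)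
    (hf : IsGpdHomFun G H f) : IsGpdHomFun G K (g ∘ f) :=
  ⟨fun a => by simp only [Function.comp, hf.1, hg.1],
    fun a => by simp only [Function.comp, hf.2.1, hg.2.1],
    fun a b hab => by
      simp only [Function.comp, hf.2.2 a b hab, hg.2.2 _ _ (by rw [← hf.1, ← hf.2.1, hab])]⟩

theorem IsGpdHomFun.map_inv {B C : Type} {G : GroupoidStruct B} {H : GroupoidStruct C}
    {f : B → C} (hf : IsGpdHomFun G H f) (a : B) : f (G.inv a) = H.inv (f a) := by
  refine (H.inv_eq_of_comp_eq_rng ?_ ?_).symm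
  · rw [← hf.1, ← hf.2.1, G.rng_inv]
  · rw [← hf.2.2 a (G.inv a) (G.rng_inv a).symm, G.comp_inv_self, hf.2.1]

theorem IsGpdHomFun.id {B : Type} (G : GroupoidStruct B) : IsGpdHomFun G G id :=
  ⟨fun _ => rfl, fun _ => rfl, fun _ _ _ => rfl⟩

namespace FundamentalGroupoid

variable {k : ℕ} {A : Type} {S : KGraphStruct k A} (F : FundamentalGroupoid S)

theorem src_i {u : A} (hu : S.IsVertex u) : F.G.src (F.i u) = F.i u := by
  rw [← F.i_hom.1, hu]

theorem rng_i {u : A} (hu : S.IsVertex u) : F.G.rng (F.i u) = F.i u := by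
  rw [← F.i_hom.2.1, hu.rng_eq]

theorem i_injOn_vertices {u u' : A} (hu : S.IsVertex u) (hu' : S.IsVertex u')
    (h : F.i u = F.i u') : u = u' := by
  obtain ⟨w, _, huniq⟩ := F.obj_bij (F.i u) (F.src_i hu)
  rw [huniq u ⟨hu, rfl⟩, huniq u' ⟨hu', h.symm⟩]

theorem exists_arrow_of_connected (hS : S.Connected) {u u' : A} (hu : S.IsVertex u)
    (hu' : S.IsVertex u') : ∃ c, F.G.src c = F.i u' ∧ F.G.rng c = F.i u := by
  refine hS.induction (fun u u' => ∃ c, F.G.src c = F.i u' ∧ F.G.rng c = F.i u)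
    (fun u hu => ⟨F.i u, F.src_i hu, F.rng_i hu⟩) ?_ ?_
    (fun f => ⟨F.i f, (F.i_hom.1 f).symm, (F.i_hom.2.1 f).symm⟩) hu hu'
  · rintro u w - - ⟨c, hc, hc'⟩
    exact ⟨F.G.inv c, by rw [F.G.src_inv, hc'], by rw [F.G.rng_inv, hc]⟩
  · rintro u w z - - - ⟨c, hc, hc'⟩ ⟨d, hd, hd'⟩
    have hcd : F.G.src c = F.G.rng d := by rw [hc, hd']
    exact ⟨F.G.comp c d, by rw [F.G.src_comp _ _ hcd, hd], by rw [F.G.rng_comp _ _ hcd, hc']⟩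

/-- The subgroupoid of arrows satisfying `P` receives a functor from `S`; uniqueness in the
universal property forces its inclusion to be surjective. -/
theorem induction {P : F.B → Prop} (base : ∀ a, P (F.i a)) (inv : ∀ b, P b → P (F.G.inv b))
    (comp : ∀ b c, F.G.src b = F.G.rng c → P b → P c → P (F.G.comp b c)) (b : F.B) : P b := by
  have hval := F.G.isGpdHomFun_restrict_val P inv comp
  have hi : IsFunctorToGpdFun S (F.G.restrict P inv comp) (fun a => ⟨F.i a, base a⟩) :=
    ⟨fun a => Subtype.ext (F.i_hom.1 a), fun a => Subtype.ext (F.i_hom.2.1 a),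
      fun a c hac => by
        have hguard : F.G.src (F.i a) = F.G.rng (F.i c) := by
          rw [← F.i_hom.1, ← F.i_hom.2.1, hac]
        exact Subtype.ext ((F.i_hom.2.2 a c hac).trans (hval.2.2 ⟨_, base a⟩ ⟨_, base c⟩
          (Subtype.ext hguard)).symm)⟩
  obtain ⟨F', ⟨hF', hF'i⟩, -⟩ := F.univ _ _ hi
  obtain ⟨W, -, huniq⟩ := F.univ F.G F.i F.i_hom
  have hsection : Subtype.val ∘ F' = id :=
    (huniq _ ⟨hval.comp hF', fun a => congrArg Subtype.val (hF'i a)⟩).trans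
      (huniq _ ⟨IsGpdHomFun.id F.G, fun _ => rfl⟩).symm
  have hb : (F' b).1 = b := congrFun hsection b
  exact hb ▸ (F' b).2

end FundamentalGroupoid

section Covering

variable {k : ℕ} {A A' : Type} {Λ : KGraphStruct k A} {Ω : KGraphStruct k A'} {p : A' → A}

theorem IsKGraphHomFun.map_isVertex {f : A' → A} (hf : IsKGraphHomFun Ω Λ f) {w : A'}
    (hw : Ω.IsVertex w) : Λ.IsVertex (f w) := by
  rw [KGraphStruct.IsVertex, ← hf.1, hw]

theorem IsCovering.isVertex_of_map (hp : IsCovering Ω Λ p) {e : A'} (he : Λ.IsVertex (p e)) :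
    Ω.IsVertex e :=
  hp.src_inj (Ω.src e) e (Ω.src_src e) (by rw [hp.hom.1, he])

theorem KGraphStruct.Connected.of_surjective {f : A' → A} (hΩ : Ω.Connected)
    (hf : IsKGraphHomFun Ω Λ f) (hsurj : Function.Surjective f) : Λ.Connected := by
  intro u v hu hv
  obtain ⟨a, rfl⟩ := hsurj u
  obtain ⟨b, rfl⟩ := hsurj v
  rw [← hu, ← hv, ← hf.1, ← hf.1]
  refine hΩ.induction (fun a b => Relation.EqvGen _ (f a) (f b)) (fun _ _ => .refl _)
    (fun _ _ _ _ => .symm _ _) (fun _ _ _ _ _ _ => .trans _ _ _) (fun g => .rel _ _ ?_)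
    (Ω.isVertex_src a) (Ω.isVertex_src b)
  exact ⟨f g, (hf.2.1 g).symm, (hf.1 g).symm⟩

variable {F : FundamentalGroupoid Λ} {act : F.B → A' → A'}

namespace CorrespondingAction

variable (hact : CorrespondingAction Ω Λ F p act)
include hact

theorem act_inv_act {b : F.B} {w : A'} (hw : Ω.IsVertex w) (hb : F.G.src b = F.i (p w)) :
    act (F.G.inv b) (act b w) = w := by
  rw [← hact.act_comp (F.G.inv b) b w hw hb (F.G.src_inv b), F.G.inv_comp_self, hb,
    hact.act_id w hw]

theorem act_act_inv {b : F.B} {w : A'} (hw : Ω.IsVertex w) (hb : F.G.rng b = F.i (p w)) :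
    act b (act (F.G.inv b) w) = w := by
  rw [← hact.act_comp b (F.G.inv b) w hw (by rw [F.G.src_inv, hb]) (F.G.rng_inv b).symm,
    F.G.comp_inv_self, hb, hact.act_id w hw]

theorem act_injOn {a : F.B} {u w : A'} (hu : Ω.IsVertex u) (hw : Ω.IsVertex w)
    (hau : F.G.src a = F.i (p u)) (haw : F.G.src a = F.i (p w)) (h : act a u = act a w) :
    u = w := by
  rw [← hact.act_inv_act hu hau, h, hact.act_inv_act hw haw]

/-- The base case covers every generator `i λ` at every vertex `w` over `s(λ)`, since `λ` has
a lift `e` with source `w`. -/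
theorem induction (hp : IsCovering Ω Λ p) {Q : F.B → A' → Prop}
    (base : ∀ e, Q (F.i (p e)) (Ω.src e))
    (inv : ∀ b w, Ω.IsVertex w → F.G.src b = F.i (p w) → Q b w → Q (F.G.inv b) (act b w))
    (comp : ∀ b c w, Ω.IsVertex w → F.G.src c = F.i (p w) → F.G.src b = F.G.rng c →
      Q c w → Q b (act c w) → Q (F.G.comp b c) w)
    {a : F.B} {w : A'} (hw : Ω.IsVertex w) (ha : F.G.src a = F.i (p w)) : Q a w := by
  induction a using F.induction generalizing w with
  | base lam =>
    have hsrc : Λ.src lam = p w :=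
      F.i_injOn_vertices (Λ.isVertex_src lam) (hp.hom.map_isVertex hw) (by rw [F.i_hom.1, ha])
    obtain ⟨e, rfl, rfl⟩ := hp.src_lift w hw lam hsrc
    exact base e
  | inv b ih =>
    have hb : F.G.rng b = F.i (p w) := by rw [← F.G.src_inv, ha]
    obtain ⟨hw', hpw'⟩ := hact.act_vertex _ w hw ha
    have := inv b _ hw' (by rw [hpw', F.G.rng_inv]) (ih hw' (by rw [hpw', F.G.rng_inv]))
    rwa [hact.act_act_inv hw hb] at this
  | comp b c hbc ihb ihc =>
    have hc : F.G.src c = F.i (p w) := by rw [← F.G.src_comp _ _ hbc, ha]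
    obtain ⟨hw', hpw'⟩ := hact.act_vertex c w hw hc
    exact comp b c w hw hc hbc (ihc hw hc) (ihb hw' (by rw [hbc, hpw']))

theorem exists_act_eq (hp : IsCovering Ω Λ p) (hΩ : Ω.Connected) {u w : A'}
    (hu : Ω.IsVertex u) (hw : Ω.IsVertex w) : ∃ a, F.G.src a = F.i (p w) ∧ act a w = u := by
  refine hΩ.induction (fun u w => ∃ a, F.G.src a = F.i (p w) ∧ act a w = u)
    (fun u hu => ⟨F.i (p u), F.src_i (hp.hom.map_isVertex hu), hact.act_id u hu⟩)
    ?_ ?_ (fun f => ⟨F.i (p f), by rw [← F.i_hom.1, hp.hom.1], hact.act_cov f⟩) hu hw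
  · rintro u w - hw ⟨a, ha, rfl⟩
    exact ⟨F.G.inv a, by rw [F.G.src_inv, (hact.act_vertex a w hw ha).2],
      hact.act_inv_act hw ha⟩
  · rintro u w z - hw hz ⟨a, ha, rfl⟩ ⟨b, hb, rfl⟩
    have hab : F.G.src a = F.G.rng b := by rw [ha, (hact.act_vertex b z hz hb).2]
    exact ⟨F.G.comp a b, by rw [F.G.src_comp _ _ hab, hb], hact.act_comp a b z hz hb hab⟩

end CorrespondingAction

end Covering

/-- The arrows of the standard covering of `Λ` based at `x`; its vertices are, in effect, the
arrows of `𝒢(Λ)` out of `x`. -/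
@[ext]
structure StdArrow {k : ℕ} {A : Type} (Λ : KGraphStruct k A) (F : FundamentalGroupoid Λ)
    (x : A) where
  arrow : A
  path : F.B
  rng_path_eq : F.G.rng path = F.i (Λ.src arrow)
  src_path_eq : F.G.src path = F.i x

namespace StdArrow

variable {k : ℕ} {A : Type} {Λ : KGraphStruct k A} {F : FundamentalGroupoid Λ} {x : A}

theorem src_i_arrow (q : StdArrow Λ F x) : F.G.src (F.i q.arrow) = F.G.rng q.path := by
  rw [← F.i_hom.1, q.rng_path_eq]

def src (q : StdArrow Λ F x) : StdArrow Λ F x :=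
  ⟨Λ.src q.arrow, q.path, by rw [Λ.src_src, q.rng_path_eq], q.src_path_eq⟩

def rng (q : StdArrow Λ F x) : StdArrow Λ F x :=
  ⟨Λ.rng q.arrow, F.G.comp (F.i q.arrow) q.path,
    by rw [F.G.rng_comp _ _ q.src_i_arrow, ← F.i_hom.2.1, Λ.src_rng],
    by rw [F.G.src_comp _ _ q.src_i_arrow, q.src_path_eq]⟩

theorem src_arrow (q : StdArrow Λ F x) : q.src.arrow = Λ.src q.arrow := rfl

theorem rng_arrow (q : StdArrow Λ F x) : q.rng.arrow = Λ.rng q.arrow := rfl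

theorem rng_path (q : StdArrow Λ F x) :
    q.rng.path = F.G.comp (F.i q.arrow) q.path := rfl

theorem arrow_src_eq_of_src_eq {q r : StdArrow Λ F x} (h : q.src = r.rng) :
    Λ.src q.arrow = Λ.rng r.arrow :=
  congrArg arrow h

theorem path_eq_of_src_eq {q r : StdArrow Λ F x} (h : q.src = r.rng) :
    q.path = F.G.comp (F.i r.arrow) r.path :=
  congrArg path h

open Classical in
/-- The composition of a non-composable pair is junk. -/
noncomputable def comp (q r : StdArrow Λ F x) : StdArrow Λ F x :=
  if h : q.src = r.rng then
    ⟨Λ.comp q.arrow r.arrow, r.path,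
      by rw [Λ.src_comp _ _ (arrow_src_eq_of_src_eq h), r.rng_path_eq], r.src_path_eq⟩
  else q

theorem comp_arrow {q r : StdArrow Λ F x} (h : q.src = r.rng) :
    (q.comp r).arrow = Λ.comp q.arrow r.arrow := by
  rw [comp, dif_pos h]

theorem comp_path {q r : StdArrow Λ F x} (h : q.src = r.rng) : (q.comp r).path = r.path := by
  rw [comp, dif_pos h]

theorem rng_src (q : StdArrow Λ F x) : q.src.rng = q.src := by
  ext
  · exact Λ.rng_src q.arrow
  · exact F.G.comp_rng_eq q.rng_path_eq

theorem rng_rng (q : StdArrow Λ F x) : q.rng.rng = q.rng := by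
  ext
  · exact Λ.rng_rng q.arrow
  · exact F.G.comp_rng_eq (by rw [rng_path, F.G.rng_comp _ _ q.src_i_arrow, ← F.i_hom.2.1]; rfl)

theorem src_comp {q r : StdArrow Λ F x} (h : q.src = r.rng) : (q.comp r).src = r.src :=
  StdArrow.ext
    (by rw [src_arrow, comp_arrow h, Λ.src_comp _ _ (arrow_src_eq_of_src_eq h), src_arrow])
    (comp_path h)

theorem rng_comp {q r : StdArrow Λ F x} (h : q.src = r.rng) : (q.comp r).rng = q.rng := by
  have h₁ := arrow_src_eq_of_src_eq h
  have hi : F.G.src (F.i q.arrow) = F.G.rng (F.i r.arrow) := by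
    rw [← F.i_hom.1, ← F.i_hom.2.1, h₁]
  ext
  · simp only [rng_arrow, comp_arrow h, Λ.rng_comp _ _ h₁]
  · simp only [rng_path, comp_arrow h, comp_path h, F.i_hom.2.2 _ _ h₁,
      F.G.assoc _ _ _ hi r.src_i_arrow, ← path_eq_of_src_eq h]

theorem factor (f : StdArrow Λ F x) (m n : Fin k → ℕ) (hd : Λ.deg f.arrow = m + n) :
    ∃! q : StdArrow Λ F x × StdArrow Λ F x, q.1.src = q.2.rng ∧ Λ.deg q.1.arrow = m ∧
      Λ.deg q.2.arrow = n ∧ q.1.comp q.2 = f := by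
  obtain ⟨⟨α, β⟩, ⟨hαβ, hα, hβ, hf⟩, huniq⟩ := Λ.factor f.arrow m n hd
  have hrng : F.G.rng f.path = F.i (Λ.src β) := by
    rw [f.rng_path_eq, ← hf, Λ.src_comp _ _ hαβ]
  let q₂ : StdArrow Λ F x := ⟨β, f.path, hrng, f.src_path_eq⟩
  have hq₂ : F.G.src (F.i β) = F.G.rng f.path := q₂.src_i_arrow
  let q₁ : StdArrow Λ F x := ⟨α, F.G.comp (F.i β) f.path,
    by rw [F.G.rng_comp _ _ hq₂, ← F.i_hom.2.1, hαβ],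
    by rw [F.G.src_comp _ _ hq₂, f.src_path_eq]⟩
  have hq : q₁.src = q₂.rng := StdArrow.ext hαβ rfl
  refine ⟨(q₁, q₂), ⟨hq, hα, hβ, StdArrow.ext ((comp_arrow hq).trans hf) (comp_path hq)⟩, ?_⟩
  rintro ⟨r₁, r₂⟩ ⟨hr, hr₁, hr₂, rfl⟩
  have harrows := huniq (r₁.arrow, r₂.arrow)
    ⟨arrow_src_eq_of_src_eq hr, hr₁, hr₂, (comp_arrow hr).symm⟩
  simp only [Prod.mk.injEq] at harrows ⊢
  have hpath₂ : r₂.path = (r₁.comp r₂).path := (comp_path hr).symm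
  refine ⟨StdArrow.ext harrows.1 ?_, StdArrow.ext harrows.2 hpath₂⟩
  rw [path_eq_of_src_eq hr, harrows.2, hpath₂]

end StdArrow

section StdCovering

variable {k : ℕ} {A : Type} (Λ : KGraphStruct k A) (F : FundamentalGroupoid Λ) (x : A)

noncomputable def stdCovering : KGraphStruct k (StdArrow Λ F x) where
  src := StdArrow.src
  rng := StdArrow.rng
  comp := StdArrow.comp
  deg q := Λ.deg q.arrow
  src_src q := StdArrow.ext (Λ.src_src q.arrow) rfl
  rng_src := StdArrow.rng_src
  src_rng q := StdArrow.ext (Λ.src_rng q.arrow) rfl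
  rng_rng := StdArrow.rng_rng
  comp_src_id q := by
    have h : q.src = q.src.rng := q.rng_src.symm
    exact StdArrow.ext (by rw [StdArrow.comp_arrow h, StdArrow.src_arrow, Λ.comp_src_id])
      (StdArrow.comp_path h)
  rng_comp_id q := by
    have h : q.rng.src = q.rng := StdArrow.ext (Λ.src_rng q.arrow) rfl
    exact StdArrow.ext (by rw [StdArrow.comp_arrow h, StdArrow.rng_arrow, Λ.rng_comp_id])
      (StdArrow.comp_path h)
  src_comp _ _ := StdArrow.src_comp
  rng_comp _ _ := StdArrow.rng_comp
  assoc q r t hqr hrt := by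
    have hqr_t : (q.comp r).src = t.rng := by rw [StdArrow.src_comp hqr, hrt]
    have hq_rt : q.src = (r.comp t).rng := by rw [StdArrow.rng_comp hrt, hqr]
    refine StdArrow.ext ?_ ?_
    · rw [StdArrow.comp_arrow hqr_t, StdArrow.comp_arrow hq_rt, StdArrow.comp_arrow hqr,
        StdArrow.comp_arrow hrt, Λ.assoc _ _ _ (StdArrow.arrow_src_eq_of_src_eq hqr)
          (StdArrow.arrow_src_eq_of_src_eq hrt)]
    · rw [StdArrow.comp_path hqr_t, StdArrow.comp_path hq_rt, StdArrow.comp_path hrt]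
  deg_comp q r h := by
    show Λ.deg (q.comp r).arrow = _
    rw [StdArrow.comp_arrow h, Λ.deg_comp _ _ (StdArrow.arrow_src_eq_of_src_eq h)]
  deg_src q := Λ.deg_src q.arrow
  factor := StdArrow.factor

variable {Λ F x} in
theorem StdArrow.arrow_isVertex {t : StdArrow Λ F x} (ht : (stdCovering Λ F x).IsVertex t) :
    Λ.IsVertex t.arrow :=
  congrArg StdArrow.arrow (show t.src = t from ht)

theorem isCovering_stdCovering (hΛ : Λ.Connected) (hx : Λ.IsVertex x) :
    IsCovering (stdCovering Λ F x) Λ StdArrow.arrow where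
  hom := ⟨fun _ => rfl, fun _ => rfl, fun _ _ h => StdArrow.comp_arrow h, fun _ => rfl⟩
  surj g := by
    obtain ⟨c, hc, hc'⟩ := F.exists_arrow_of_connected hΛ (Λ.isVertex_src g) hx
    exact ⟨⟨g, c, hc', hc⟩, rfl⟩
  src_inj q r h h' := StdArrow.ext h' (congrArg StdArrow.path h :)
  src_lift t ht g hg := by
    have ht' : Λ.src t.arrow = t.arrow := StdArrow.arrow_isVertex ht
    refine ⟨⟨g, t.path, by rw [t.rng_path_eq, hg, ht'], t.src_path_eq⟩,
      StdArrow.ext hg rfl, rfl⟩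
  rng_inj q r h h' := by
    have hpath : F.G.comp (F.i q.arrow) q.path = F.G.comp (F.i r.arrow) r.path :=
      congrArg StdArrow.path h
    rw [h'] at hpath
    exact StdArrow.ext h' (F.G.comp_left_cancel (by rw [← h', q.src_i_arrow]) r.src_i_arrow hpath)
  rng_lift t ht g hg := by
    have ht' : Λ.src t.arrow = t.arrow := StdArrow.arrow_isVertex ht
    have hguard : F.G.src (F.G.inv (F.i g)) = F.G.rng t.path := by
      rw [F.G.src_inv, ← F.i_hom.2.1, hg, t.rng_path_eq, ht']
    refine ⟨⟨g, F.G.comp (F.G.inv (F.i g)) t.path, ?_, ?_⟩, StdArrow.ext hg ?_, rfl⟩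
    · rw [F.G.rng_comp _ _ hguard, F.G.rng_inv, ← F.i_hom.1]
    · rw [F.G.src_comp _ _ hguard, t.src_path_eq]
    · refine F.G.comp_inv_cancel_left ?_
      rw [t.rng_path_eq, ← F.i_hom.2.1, hg, ht']

/-- By induction on `c`: a generator `i λ` contributes the arrow `(λ, t.path)`. -/
theorem stdCovering_linked (c : F.B) {t t' : StdArrow Λ F x}
    (ht : (stdCovering Λ F x).IsVertex t) (ht' : (stdCovering Λ F x).IsVertex t')
    (hc : F.G.src c = F.G.rng t.path) (hpath : t'.path = F.G.comp c t.path) :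
    Relation.EqvGen (fun a b => ∃ f, (stdCovering Λ F x).rng f = a ∧
      (stdCovering Λ F x).src f = b) t' t := by
  induction c using F.induction generalizing t t' with
  | base lam =>
    have hs := StdArrow.arrow_isVertex ht
    have hs' := StdArrow.arrow_isVertex ht'
    have hlam : Λ.src lam = t.arrow :=
      F.i_injOn_vertices (Λ.isVertex_src lam) hs (by rw [F.i_hom.1, hc, t.rng_path_eq, hs])
    have hlam' : Λ.rng lam = t'.arrow := by
      refine F.i_injOn_vertices (Λ.isVertex_rng lam) hs' ?_
      rw [F.i_hom.2.1, ← hs', ← t'.rng_path_eq, hpath, F.G.rng_comp _ _ hc]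
    refine .rel _ _ ⟨⟨lam, t.path, by rw [t.rng_path_eq, hlam, hs], t.src_path_eq⟩, ?_, ?_⟩
    · exact StdArrow.ext hlam' hpath.symm
    · exact StdArrow.ext hlam rfl
  | inv b ih =>
    have hb : F.G.rng b = F.G.rng t.path := by rw [← F.G.src_inv, hc]
    refine .symm _ _ (ih ht' ht ?_ ?_)
    · rw [hpath, F.G.rng_comp _ _ hc, F.G.rng_inv]
    · rw [hpath, F.G.comp_inv_cancel_left hb]
  | comp b d hbd ihb ihd =>
    have hd : F.G.src d = F.G.rng t.path := by rw [← F.G.src_comp _ _ hbd, hc]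
    obtain ⟨u, ⟨hu, hiu⟩, -⟩ := F.obj_bij (F.G.rng d) (F.G.src_rng d)
    let t'' : StdArrow Λ F x := ⟨u, F.G.comp d t.path,
      by rw [F.G.rng_comp _ _ hd, hu, hiu], by rw [F.G.src_comp _ _ hd, t.src_path_eq]⟩
    have ht'' : (stdCovering Λ F x).IsVertex t'' := StdArrow.ext hu rfl
    refine .trans _ _ _ (ihb ht'' ht' ?_ ?_) (ihd ht ht'' hd rfl)
    · rw [F.G.rng_comp _ _ hd, hbd]
    · rw [hpath, F.G.assoc _ _ _ hbd hd]

theorem stdCovering_connected (hx : Λ.IsVertex x) : (stdCovering Λ F x).Connected := by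
  let base : StdArrow Λ F x := ⟨x, F.i x, by rw [hx, F.rng_i hx], F.src_i hx⟩
  have hbase : (stdCovering Λ F x).IsVertex base := StdArrow.ext hx rfl
  have linked : ∀ t, (stdCovering Λ F x).IsVertex t → Relation.EqvGen _ t base :=
    fun t ht => stdCovering_linked Λ F x t.path hbase ht (by rw [t.src_path_eq, F.rng_i hx])
      (F.G.comp_src_eq t.src_path_eq).symm
  exact fun u v hu hv => .trans _ _ _ (linked u hu) (.symm _ _ (linked v hv))

end StdCovering

section Free

variable {k : ℕ} {A A' : Type} {Λ : KGraphStruct k A} {Ω : KGraphStruct k A'} {p : A' → A}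
  {F : FundamentalGroupoid Λ} {act : F.B → A' → A'}

theorem CorrespondingAction.path_act (hact : CorrespondingAction Ω Λ F p act)
    (hp : IsCovering Ω Λ p) {x : A} {φ : A' → StdArrow Λ F x}
    (hφ : IsKGraphHomFun Ω (stdCovering Λ F x) φ) (hφp : ∀ e, (φ e).arrow = p e)
    {a : F.B} {w : A'} (hw : Ω.IsVertex w) (ha : F.G.src a = F.i (p w)) :
    (φ (act a w)).path = F.G.comp a (φ w).path := by
  have rng_path : ∀ w, Ω.IsVertex w → F.G.rng (φ w).path = F.i (p w) := fun w hw => by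
    rw [(φ w).rng_path_eq, hφp, hp.hom.map_isVertex hw]
  refine hact.induction hp (Q := fun a w => (φ (act a w)).path = F.G.comp a (φ w).path)
    (fun e => ?_) (fun b w hw hb hbw => ?_) (fun b c w hw hc hbc hcw hbcw => ?_) hw ha
  · have hsrc : (φ (Ω.src e)).path = (φ e).path := by rw [hφ.1 e]; rfl
    rw [hact.act_cov, hφ.2.1, hsrc, ← hφp]
    rfl
  · rw [hact.act_inv_act hw hb, hbw, F.G.inv_comp_cancel_left (by rw [hb, rng_path w hw])]
  · rw [hact.act_comp b c w hw hc hbc, hbcw, hcw,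
      F.G.assoc _ _ _ hbc (by rw [hc, rng_path w hw])]

theorem IsUniversalCovering.eq_of_act_eq_self (hp : IsUniversalCovering Ω Λ p)
    (hact : CorrespondingAction Ω Λ F p act) {w : A'} (hw : Ω.IsVertex w) {a : F.B}
    (ha : F.G.src a = F.i (p w)) (h : act a w = w) : a = F.i (p w) := by
  obtain ⟨hcov, hΩ, huniv⟩ := hp
  have hx := hcov.hom.map_isVertex hw
  obtain ⟨φ, hφ, hφp⟩ := huniv _ _ _
    (isCovering_stdCovering Λ F (p w) (hΩ.of_surjective hcov.hom hcov.surj) hx)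
    (stdCovering_connected Λ F (p w) hx)
  have hpath := hact.path_act hcov hφ hφp hw ha
  rw [h] at hpath
  have hrng : F.G.rng (φ w).path = F.i (p w) := by
    rw [(φ w).rng_path_eq, hφp, hx]
  refine F.G.comp_right_cancel (by rw [ha, hrng]) (by rw [F.src_i hx, hrng]) ?_
  rw [← hpath, F.G.comp_rng_eq hrng]

theorem IsUniversalCovering.act_injective (hp : IsUniversalCovering Ω Λ p)
    (hact : CorrespondingAction Ω Λ F p act) {w : A'} (hw : Ω.IsVertex w) {a a' : F.B}
    (ha : F.G.src a = F.i (p w)) (ha' : F.G.src a' = F.i (p w)) (h : act a w = act a' w) :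
    a = a' := by
  have hrng : F.G.rng a = F.G.rng a' := by
    rw [← (hact.act_vertex a w hw ha).2, h, (hact.act_vertex a' w hw ha').2]
  have hguard : F.G.src (F.G.inv a') = F.G.rng a := by rw [F.G.src_inv, hrng]
  have hid := hp.eq_of_act_eq_self hact hw (by rw [F.G.src_comp _ _ hguard, ha])
    (by rw [hact.act_comp _ _ w hw ha hguard, h, hact.act_inv_act hw ha'])
  rw [← F.G.comp_inv_cancel_left hrng.symm, hid, F.G.comp_src_eq ha']

end Free

namespace CorrespondingAction

variable {k : ℕ} {A A' A'' : Type} {Λ : KGraphStruct k A} {Ω : KGraphStruct k A'}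
  {Sg : KGraphStruct k A''} {p : A' → A} {r : A'' → A} {F : FundamentalGroupoid Λ}
  {act : F.B → A' → A'} {ψ : A' → A''}
  (hact : CorrespondingAction Ω Λ F p act) (hp : IsCovering Ω Λ p)
  (hψ : IsKGraphHomFun Ω Sg ψ) (hψr : ∀ e, r (ψ e) = p e)
include hact hp hψ hψr

/-- The base case: as `Sg` is a covering, lifts of one arrow of `Λ` with a common source, or
with a common range, coincide. -/
theorem map_eq_iff_map_act_eq (hr : IsCovering Sg Λ r) {a : F.B} {w w' : A'}
    (hw : Ω.IsVertex w) (hw' : Ω.IsVertex w') (ha : F.G.src a = F.i (p w))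
    (ha' : F.G.src a = F.i (p w')) : ψ w = ψ w' ↔ ψ (act a w) = ψ (act a w') := by
  refine hact.induction hp (Q := fun a w => ∀ w', Ω.IsVertex w' → F.G.src a = F.i (p w') →
      (ψ w = ψ w' ↔ ψ (act a w) = ψ (act a w'))) ?_ ?_ ?_ hw ha w' hw' ha'
  · intro e w' hw' he
    have hsrc : Λ.src (p e) = p w' := F.i_injOn_vertices (Λ.isVertex_src _)
      (hp.hom.map_isVertex hw') (by rw [F.i_hom.1, he])
    obtain ⟨e', rfl, he'⟩ := hp.src_lift w' hw' (p e) hsrc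
    rw [hact.act_cov, ← he', hact.act_cov, hψ.1, hψ.1, hψ.2.1, hψ.2.1]
    have hr_eq : r (ψ e) = r (ψ e') := by rw [hψr, hψr, he']
    exact ⟨fun h => by rw [hr.src_inj _ _ h hr_eq], fun h => by rw [hr.rng_inj _ _ h hr_eq]⟩
  · intro b w hw hb ih w' hw' hb'
    have hb'' : F.G.rng b = F.i (p w') := by rw [← F.G.src_inv, hb']
    obtain ⟨hw'', hpw''⟩ := hact.act_vertex _ w' hw' hb'
    have := ih _ hw'' (by rw [hpw'', F.G.rng_inv])
    rw [hact.act_act_inv hw' hb''] at this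
    rw [hact.act_inv_act hw hb, this]
  · intro b c w hw hc hbc ihc ihb w' hw' hbc'
    have hc' : F.G.src c = F.i (p w') := by rw [← F.G.src_comp _ _ hbc, hbc']
    rw [ihc w' hw' hc', ihb _ (hact.act_vertex c w' hw' hc').1
      (by rw [hbc, (hact.act_vertex c w' hw' hc').2]),
      hact.act_comp b c w hw hc hbc, hact.act_comp b c w' hw' hc' hbc]

variable {FS : FundamentalGroupoid Sg} {qst : FS.B → F.B} (hqst : IsGpdHomFun FS.G F.G qst)
  (hqsti : ∀ a, qst (FS.i a) = F.i (r a))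
include hqst hqsti

theorem exists_arrow_map_eq {a : F.B} {w : A'} (hw : Ω.IsVertex w)
    (ha : F.G.src a = F.i (p w)) : ∃ b, qst b = a ∧ FS.G.src b = FS.i (ψ w) ∧
      FS.G.rng b = FS.i (ψ (act a w)) := by
  refine hact.induction hp (Q := fun a w => ∃ b, qst b = a ∧ FS.G.src b = FS.i (ψ w) ∧
      FS.G.rng b = FS.i (ψ (act a w))) (fun e => ?_) ?_ ?_ hw ha
  · refine ⟨FS.i (ψ e), by rw [hqsti, hψr], ?_, ?_⟩
    · rw [← FS.i_hom.1, hψ.1]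
    · rw [← FS.i_hom.2.1, hact.act_cov, hψ.2.1]
  · rintro b w hw hb ⟨c, rfl, hc, hc'⟩
    refine ⟨FS.G.inv c, hqst.map_inv c, by rw [FS.G.src_inv, hc'], ?_⟩
    rw [FS.G.rng_inv, hc, hact.act_inv_act hw hb]
  · rintro b c w hw hc hbc ⟨c', rfl, hc', hc''⟩ ⟨b', rfl, hb', hb''⟩
    have hbc' : FS.G.src b' = FS.G.rng c' := by rw [hb', hc'']
    refine ⟨FS.G.comp b' c', hqst.2.2 _ _ hbc', by rw [FS.G.src_comp _ _ hbc', hc'], ?_⟩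
    rw [FS.G.rng_comp _ _ hbc', hb'', hact.act_comp _ _ w hw hc hbc]

theorem src_eq_iff_rng_eq (hr : IsCovering Sg Λ r) (b : FS.B) {w : A'} (hw : Ω.IsVertex w)
    (hb : F.G.src (qst b) = F.i (p w)) :
    FS.G.src b = FS.i (ψ w) ↔ FS.G.rng b = FS.i (ψ (act (qst b) w)) := by
  induction b using FS.induction generalizing w with
  | base α =>
    rw [hqsti] at hb ⊢
    obtain ⟨hw', hpw'⟩ := hact.act_vertex _ w hw hb
    have hψw := hψ.map_isVertex hw
    have hψw' := hψ.map_isVertex hw'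
    rw [← FS.i_hom.1, ← FS.i_hom.2.1]
    constructor
    · intro hα
      have hα := FS.i_injOn_vertices (Sg.isVertex_src α) hψw hα
      obtain ⟨e, rfl, he⟩ := hp.src_lift w hw (r α) (by rw [← hr.hom.1, hα, hψr])
      have hψe : ψ e = α := hr.src_inj _ _ (by rw [← hψ.1, hα]) (by rw [hψr, he])
      rw [← he, hact.act_cov, hψ.2.1, hψe]
    · intro hα
      have hα := FS.i_injOn_vertices (Sg.isVertex_rng α) hψw' hα
      obtain ⟨e, he', he⟩ := hp.rng_lift _ hw' (r α) (by rw [← hr.hom.2.1, hα, hψr])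
      have hψe : ψ e = α := hr.rng_inj _ _ (by rw [← hψ.2.1, hα, he']) (by rw [hψr, he])
      have hsrc : Ω.src e = w := by
        refine hact.act_injOn (Ω.isVertex_src e) hw ?_ hb ?_
        · rw [← he, ← F.i_hom.1, hp.hom.1]
        · rw [← he, hact.act_cov, he', he]
      rw [← hψe, ← hψ.1, hsrc]
  | inv b ih =>
    rw [hqst.map_inv] at hb ⊢
    obtain ⟨hw', hpw'⟩ := hact.act_vertex _ w hw hb
    have hrng : F.G.rng (qst b) = F.i (p w) := by rw [← F.G.src_inv, hb]
    have := ih hw' (by rw [hpw', F.G.rng_inv])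
    rw [hact.act_act_inv hw hrng] at this
    rw [FS.G.src_inv, FS.G.rng_inv, this.symm]
  | comp b c hbc ihb ihc =>
    have hqbc : F.G.src (qst b) = F.G.rng (qst c) := by rw [← hqst.1, hbc, hqst.2.1]
    rw [hqst.2.2 _ _ hbc] at hb ⊢
    have hc : F.G.src (qst c) = F.i (p w) := by rw [← F.G.src_comp _ _ hqbc, hb]
    obtain ⟨hw', hpw'⟩ := hact.act_vertex _ w hw hc
    rw [FS.G.src_comp _ _ hbc, FS.G.rng_comp _ _ hbc, ihc hw hc, ← hbc,
      ihb hw' (by rw [hqbc, hpw']), hact.act_comp _ _ w hw hc hqbc]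

end CorrespondingAction

section RightAction

variable {k : ℕ} {A A' : Type} {Λ : KGraphStruct k A} {Ω : KGraphStruct k A'} {p : A' → A}
  {F : FundamentalGroupoid Λ} {act : F.B → A' → A'} {v : A'}

variable (Ω p F act v) in
open Classical in
/-- The canonical right action of `π(Λ, p v)` on `Ω`: if `s(λ) = a v`, then `λ c` is the lift
of `p λ` with source `a c v`. It is meaningless junk (`λ` itself) when no such lift exists. -/
noncomputable def rightAct (lam : A') (c : F.B) : A' :=
  if h : ∃ e, p e = p lam ∧ ∃ a, F.G.src a = F.i (p v) ∧ act a v = Ω.src lam ∧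
      Ω.src e = act (F.G.comp a c) v then h.choose else lam

theorem rightAct_spec (hp : IsUniversalCovering Ω Λ p) (hact : CorrespondingAction Ω Λ F p act)
    (hv : Ω.IsVertex v) {lam : A'} {c a : F.B} (hc : F.G.src c = F.i (p v))
    (hc' : F.G.rng c = F.i (p v)) (ha : F.G.src a = F.i (p v)) (hav : act a v = Ω.src lam) :
    p (rightAct Ω p F act v lam c) = p lam ∧
      Ω.src (rightAct Ω p F act v lam c) = act (F.G.comp a c) v := by
  have hac : F.G.src a = F.G.rng c := by rw [ha, hc']
  have hsrc : F.G.src (F.G.comp a c) = F.i (p v) := by rw [F.G.src_comp _ _ hac, hc]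
  obtain ⟨hw, hpw⟩ := hact.act_vertex _ v hv hsrc
  have hlift : ∃ e, p e = p lam ∧ ∃ a, F.G.src a = F.i (p v) ∧ act a v = Ω.src lam ∧
      Ω.src e = act (F.G.comp a c) v := by
    have hpsrc : Λ.src (p lam) = p (act (F.G.comp a c) v) := by
      refine F.i_injOn_vertices (Λ.isVertex_src _) (hp.1.hom.map_isVertex hw) ?_
      rw [hpw, F.G.rng_comp _ _ hac, ← (hact.act_vertex a v hv ha).2, hav, hp.1.hom.1]
    obtain ⟨e, he, he'⟩ := hp.1.src_lift _ hw (p lam) hpsrc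
    exact ⟨e, he', a, ha, hav, he⟩
  obtain ⟨he, a', ha', ha'v, he'⟩ := hlift.choose_spec
  have : a' = a := hp.act_injective hact hv ha' ha (ha'v.trans hav.symm)
  rw [rightAct, dif_pos hlift]
  exact ⟨he, this ▸ he'⟩

end RightAction

namespace SubgroupQuotientData

variable {k : ℕ} {A A' : Type} {Λ : KGraphStruct k A} {Ω : KGraphStruct k A'} {p : A' → A}
  {F : FundamentalGroupoid Λ} {act : F.B → A' → A'} {x : A} {v : A'}
  (D : SubgroupQuotientData Λ Ω F p act x v)

theorem mem_pi1 {c : F.B} (hc : c ∈ D.H) : F.G.src c = F.i x ∧ F.G.rng c = F.i x :=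
  D.subgroup.1 c hc

theorem ract_of_isVertex (hp : IsCovering Ω Λ p) {u : A'} (hu : Ω.IsVertex u) {c a : F.B}
    (hc : c ∈ D.H) (ha : F.G.src a = F.i x) (hau : act a v = u) :
    D.ract u c = act (F.G.comp a c) v := by
  obtain ⟨hp₁, hp₂⟩ := D.ract_spec u c a hc ha (hau.trans hu.symm)
  have hvert : Ω.IsVertex (D.ract u c) :=
    hp.isVertex_of_map (by rw [hp₁]; exact hp.hom.map_isVertex hu)
  exact hvert.symm.trans hp₂

theorem qmap_ract (lam : A') {c : F.B} (hc : c ∈ D.H) : D.qmap (D.ract lam c) = D.qmap lam :=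
  ((D.qmap_fib _ _).2 ⟨c, hc, rfl⟩).symm

theorem exists_isVertex_qmap_eq {V : D.Qc} (hV : D.Q.IsVertex V) :
    ∃ w, Ω.IsVertex w ∧ D.qmap w = V := by
  obtain ⟨u, rfl⟩ := D.qmap_surj V
  exact ⟨Ω.src u, Ω.isVertex_src u, by rw [D.qmap_hom.1, hV]⟩

variable (hp : IsUniversalCovering Ω Λ p) (hact : CorrespondingAction Ω Λ F p act)
  (hv : Ω.IsVertex v) (hpv : p v = x)
include hp hact hv hpv

theorem map_ract (lam : A') {c : F.B} (hc : c ∈ D.H) : p (D.ract lam c) = p lam := by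
  obtain ⟨a, ha, hav⟩ := hact.exists_act_eq hp.1 hp.2.1 (Ω.isVertex_src lam) hv
  exact (D.ract_spec lam c a hc (hpv ▸ ha) hav).1

theorem src_ract (lam : A') {c : F.B} (hc : c ∈ D.H) :
    Ω.src (D.ract lam c) = D.ract (Ω.src lam) c := by
  obtain ⟨a, ha, hav⟩ := hact.exists_act_eq hp.1 hp.2.1 (Ω.isVertex_src lam) hv
  rw [hpv] at ha
  rw [(D.ract_spec lam c a hc ha hav).2, D.ract_of_isVertex hp.1 (Ω.isVertex_src lam) hc ha hav]

theorem ract_act {w : A'} (hw : Ω.IsVertex w) {c b : F.B} (hc : c ∈ D.H)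
    (hb : F.G.src b = F.i (p w)) : D.ract (act b w) c = act b (D.ract w c) := by
  obtain ⟨a, hav, rfl⟩ := hact.exists_act_eq hp.1 hp.2.1 hw hv
  have ha : F.G.src a = F.i x := hpv ▸ hav
  have hba : F.G.src b = F.G.rng a := by rw [hb, (hact.act_vertex a v hv hav).2]
  have hac : F.G.src a = F.G.rng c := by rw [ha, (D.mem_pi1 hc).2]
  have hbav : act (F.G.comp b a) v = act b (act a v) := hact.act_comp b a v hv hav hba
  rw [D.ract_of_isVertex hp.1 hw hc ha rfl,
    D.ract_of_isVertex hp.1 (hact.act_vertex _ _ hw hb).1 hc (by rw [F.G.src_comp _ _ hba, ha])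
      hbav, F.G.assoc _ _ _ hba hac, hact.act_comp b _ v hv
      (by rw [F.G.src_comp _ _ hac, (D.mem_pi1 hc).1, hpv]) (by rw [F.G.rng_comp _ _ hac, hba])]

theorem rng_ract (lam : A') {c : F.B} (hc : c ∈ D.H) :
    Ω.rng (D.ract lam c) = D.ract (Ω.rng lam) c := by
  have hb : F.G.src (F.i (p lam)) = F.i (p (Ω.src lam)) := by rw [← F.i_hom.1, hp.1.hom.1]
  rw [← hact.act_cov (D.ract lam c), D.map_ract hp hact hv hpv lam hc,
    D.src_ract hp hact hv hpv lam hc, ← D.ract_act hp hact hv hpv (Ω.isVertex_src lam) hc hb,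
    hact.act_cov]

theorem eq_of_ract_eq_self {w : A'} (hw : Ω.IsVertex w) {c : F.B} (hc : c ∈ D.H)
    (h : D.ract w c = w) : c = F.i x := by
  obtain ⟨a, ha, rfl⟩ := hact.exists_act_eq hp.1 hp.2.1 hw hv
  rw [hpv] at ha
  have hac : F.G.src a = F.G.rng c := by rw [ha, (D.mem_pi1 hc).2]
  rw [D.ract_of_isVertex hp.1 hw hc ha rfl] at h
  have hsrc : F.G.src (F.G.comp a c) = F.i (p v) := by
    rw [F.G.src_comp _ _ hac, (D.mem_pi1 hc).1, hpv]
  have hcomp := hp.act_injective hact hv hsrc (by rw [ha, hpv]) h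
  rw [← ha]
  exact F.G.comp_left_cancel hac (F.G.rng_src a).symm (by rw [hcomp, F.G.comp_src_id])

theorem isCovering_qbar : IsCovering D.Q Λ D.qbar where
  hom := D.qbar_hom
  surj g := by
    obtain ⟨e, rfl⟩ := hp.1.surj g
    exact ⟨D.qmap e, D.qbar_comm e⟩
  src_inj α β h h' := by
    obtain ⟨a, rfl⟩ := D.qmap_surj α
    obtain ⟨b, rfl⟩ := D.qmap_surj β
    rw [← D.qmap_hom.1, ← D.qmap_hom.1] at h
    obtain ⟨c, hc, hcb⟩ := (D.qmap_fib _ _).1 h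
    rw [← D.qmap_ract a hc, hp.1.src_inj (D.ract a c) b
      (by rw [D.src_ract hp hact hv hpv a hc, hcb])
      (by rw [D.map_ract hp hact hv hpv a hc, ← D.qbar_comm, h', D.qbar_comm])]
  src_lift V hV g hg := by
    obtain ⟨w, hw, rfl⟩ := D.exists_isVertex_qmap_eq hV
    obtain ⟨e, he, rfl⟩ := hp.1.src_lift w hw g (by rw [hg, D.qbar_comm])
    exact ⟨D.qmap e, by rw [← D.qmap_hom.1, he], D.qbar_comm e⟩
  rng_inj α β h h' := by
    obtain ⟨a, rfl⟩ := D.qmap_surj α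
    obtain ⟨b, rfl⟩ := D.qmap_surj β
    rw [← D.qmap_hom.2.1, ← D.qmap_hom.2.1] at h
    obtain ⟨c, hc, hcb⟩ := (D.qmap_fib _ _).1 h
    rw [← D.qmap_ract a hc, hp.1.rng_inj (D.ract a c) b
      (by rw [D.rng_ract hp hact hv hpv a hc, hcb])
      (by rw [D.map_ract hp hact hv hpv a hc, ← D.qbar_comm, h', D.qbar_comm])]
  rng_lift V hV g hg := by
    obtain ⟨w, hw, rfl⟩ := D.exists_isVertex_qmap_eq hV
    obtain ⟨e, he, rfl⟩ := hp.1.rng_lift w hw g (by rw [hg, D.qbar_comm])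
    exact ⟨D.qmap e, by rw [← D.qmap_hom.2.1, he], D.qbar_comm e⟩

theorem H_eq_image_pi1 (FQ : FundamentalGroupoid D.Q) {qst : FQ.B → F.B}
    (hqst : IsGpdHomFun FQ.G F.G qst) (hqsti : ∀ a, qst (FQ.i a) = F.i (D.qbar a)) :
    D.H = qst '' FQ.pi1 (D.qmap v) := by
  have hqv : D.Q.IsVertex (D.qmap v) := D.qmap_hom.map_isVertex hv
  have hx : Λ.IsVertex x := hpv ▸ hp.1.hom.map_isVertex hv
  have hract : ∀ c ∈ D.H, D.ract v c = act c v := fun c hc => by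
    rw [D.ract_of_isVertex hp.1 hv hc (F.src_i hx) (by rw [← hpv, hact.act_id v hv]),
      F.G.comp_rng_eq (D.mem_pi1 hc).2]
  ext c
  constructor
  · intro hc
    obtain ⟨b, rfl, hb, hb'⟩ := hact.exists_arrow_map_eq hp.1 D.qmap_hom D.qbar_comm hqst hqsti
      hv (by rw [(D.mem_pi1 hc).1, hpv])
    refine ⟨b, ⟨hb, ?_⟩, rfl⟩
    rw [hb', ← hract _ hc, D.qmap_ract v hc]
  · rintro ⟨b, ⟨hb, hb'⟩, rfl⟩
    have hsrc : F.G.src (qst b) = F.i (p v) := by rw [← hqst.1, hb, hqsti, D.qbar_comm]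
    have hrng := (hact.src_eq_iff_rng_eq hp.1 D.qmap_hom D.qbar_comm hqst hqsti
      (isCovering_qbar D hp hact hv hpv) b hv hsrc).1 hb
    obtain ⟨hw, -⟩ := hact.act_vertex _ v hv hsrc
    obtain ⟨c, hc, hcv⟩ := (D.qmap_fib v _).1
      (FQ.i_injOn_vertices hqv (D.qmap_hom.map_isVertex hw) (hb'.symm.trans hrng))
    rw [hract c hc] at hcv
    rwa [← hp.act_injective hact hv (by rw [(D.mem_pi1 hc).1, hpv]) hsrc hcv]

end SubgroupQuotientData

section Classification

variable {k : ℕ} {A A' A'' : Type} {Λ : KGraphStruct k A} {Ω : KGraphStruct k A'}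
  {Sg : KGraphStruct k A''} {p : A' → A} {r : A'' → A} {ψ : A' → A''}

theorem IsCovering.surjective_of_map (hp : IsCovering Ω Λ p) (hr : IsCovering Sg Λ r)
    (hψ : IsKGraphHomFun Ω Sg ψ) (hψr : ∀ e, r (ψ e) = p e) (hSg : Sg.Connected) {v : A'}
    (hv : Ω.IsVertex v) : Function.Surjective ψ := by
  have hvert : ∀ s, Sg.IsVertex s → ∃ w, Ω.IsVertex w ∧ ψ w = s := by
    refine fun s hs => (hSg.induction (fun s s' => (∃ w, Ω.IsVertex w ∧ ψ w = s) ↔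
      (∃ w, Ω.IsVertex w ∧ ψ w = s')) (fun _ _ => Iff.rfl) (fun _ _ _ _ h => h.symm)
      (fun _ _ _ _ _ _ h h' => h.trans h') (fun f => ?_) (hψ.map_isVertex hv) hs).1 ⟨v, hv, rfl⟩
    constructor
    · rintro ⟨w, hw, hwf⟩
      obtain ⟨e, rfl, he⟩ := hp.rng_lift w hw (r f) (by rw [← hr.hom.2.1, ← hwf, hψr])
      have hψe : ψ e = f := hr.rng_inj _ _ (by rw [← hψ.2.1, hwf]) (by rw [hψr, he])
      exact ⟨Ω.src e, Ω.isVertex_src e, by rw [hψ.1, hψe]⟩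
    · rintro ⟨w, hw, hwf⟩
      obtain ⟨e, rfl, he⟩ := hp.src_lift w hw (r f) (by rw [← hr.hom.1, ← hwf, hψr])
      have hψe : ψ e = f := hr.src_inj _ _ (by rw [← hψ.1, hwf]) (by rw [hψr, he])
      exact ⟨Ω.rng e, Ω.isVertex_rng e, by rw [hψ.2.1, hψe]⟩
  intro g
  obtain ⟨w, hw, hwg⟩ := hvert (Sg.src g) (Sg.isVertex_src g)
  obtain ⟨e, rfl, he⟩ := hp.src_lift w hw (r g) (by rw [← hr.hom.1, ← hwg, hψr])
  exact ⟨e, hr.src_inj _ _ (by rw [← hψ.1, hwg]) (by rw [hψr, he])⟩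

variable {F : FundamentalGroupoid Λ} {act : F.B → A' → A'} {v : A'}

theorem exists_rightAct_eq (hp : IsUniversalCovering Ω Λ p)
    (hact : CorrespondingAction Ω Λ F p act) (hv : Ω.IsVertex v) {a b : A'} (h : p a = p b) :
    ∃ c, F.G.src c = F.i (p v) ∧ F.G.rng c = F.i (p v) ∧ rightAct Ω p F act v a c = b := by
  obtain ⟨a₀, ha₀, ha₀v⟩ := hact.exists_act_eq hp.1 hp.2.1 (Ω.isVertex_src a) hv
  obtain ⟨a₁, ha₁, ha₁v⟩ := hact.exists_act_eq hp.1 hp.2.1 (Ω.isVertex_src b) hv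
  have hrng : F.G.rng a₀ = F.G.rng a₁ := by
    rw [← (hact.act_vertex a₀ v hv ha₀).2, ← (hact.act_vertex a₁ v hv ha₁).2, ha₀v, ha₁v,
      hp.1.hom.1, hp.1.hom.1, h]
  have hguard : F.G.src (F.G.inv a₀) = F.G.rng a₁ := by rw [F.G.src_inv, hrng]
  have hc : F.G.src (F.G.comp (F.G.inv a₀) a₁) = F.i (p v) := by
    rw [F.G.src_comp _ _ hguard, ha₁]
  have hc' : F.G.rng (F.G.comp (F.G.inv a₀) a₁) = F.i (p v) := by
    rw [F.G.rng_comp _ _ hguard, F.G.rng_inv, ha₀]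
  obtain ⟨hp₁, hp₂⟩ := rightAct_spec hp hact hv hc hc' ha₀ ha₀v
  refine ⟨_, hc, hc', hp.1.src_inj _ _ ?_ (hp₁.trans h)⟩
  rw [hp₂, F.G.comp_inv_cancel_left hrng, ha₁v]

theorem map_rightAct_eq_iff (hp : IsUniversalCovering Ω Λ p)
    (hact : CorrespondingAction Ω Λ F p act) (hv : Ω.IsVertex v) (hr : IsCovering Sg Λ r)
    (hψ : IsKGraphHomFun Ω Sg ψ) (hψr : ∀ e, r (ψ e) = p e) (lam : A') {c : F.B}
    (hc : F.G.src c = F.i (p v)) (hc' : F.G.rng c = F.i (p v)) :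
    ψ (rightAct Ω p F act v lam c) = ψ lam ↔ ψ (act c v) = ψ v := by
  obtain ⟨a₀, ha₀, ha₀v⟩ := hact.exists_act_eq hp.1 hp.2.1 (Ω.isVertex_src lam) hv
  obtain ⟨hp₁, hp₂⟩ := rightAct_spec hp hact hv hc hc' ha₀ ha₀v
  have hac : F.G.src a₀ = F.G.rng c := by rw [ha₀, hc']
  obtain ⟨hcv, hpcv⟩ := hact.act_vertex c v hv hc
  rw [hact.act_comp _ _ v hv hc hac] at hp₂
  calc ψ (rightAct Ω p F act v lam c) = ψ lam
      ↔ ψ (act a₀ (act c v)) = ψ (act a₀ v) := by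
        rw [← hp₂, ha₀v, hψ.1, hψ.1]
        exact ⟨congrArg Sg.src, fun h => hr.src_inj _ _ h (by rw [hψr, hψr, hp₁])⟩
    _ ↔ ψ (act c v) = ψ v := (hact.map_eq_iff_map_act_eq hp.1 hψ hψr hr hcv hv
        (by rw [ha₀, hpcv, hc']) ha₀).symm

variable {x : A}

theorem isSubgroupAt_stabilizer (hp : IsCovering Ω Λ p) (hact : CorrespondingAction Ω Λ F p act)
    (hv : Ω.IsVertex v) (hpv : p v = x) (hr : IsCovering Sg Λ r) (hψ : IsKGraphHomFun Ω Sg ψ)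
    (hψr : ∀ e, r (ψ e) = p e) : F.G.IsSubgroupAt (F.i x)
      {c | F.G.src c = F.i x ∧ F.G.rng c = F.i x ∧ ψ (act c v) = ψ v} := by
  subst hpv
  have hx := hp.hom.map_isVertex hv
  refine ⟨fun c hc => ⟨hc.1, hc.2.1⟩, ⟨F.src_i hx, F.rng_i hx, by rw [hact.act_id v hv]⟩, ?_, ?_⟩
  · rintro c ⟨hc, hc', hcv⟩ d ⟨hd, hd', hdv⟩
    have hcd : F.G.src c = F.G.rng d := by rw [hc, hd']
    obtain ⟨hdv', hpdv⟩ := hact.act_vertex d v hv hd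
    refine ⟨by rw [F.G.src_comp _ _ hcd, hd], by rw [F.G.rng_comp _ _ hcd, hc'], ?_⟩
    rw [hact.act_comp c d v hv hd hcd, ← hcv]
    exact (hact.map_eq_iff_map_act_eq hp hψ hψr hr hdv' hv (by rw [hpdv, hcd]) hc).1 hdv
  · rintro c ⟨hc, hc', hcv⟩
    have hinv : F.G.src (F.G.inv c) = F.i (p v) := by rw [F.G.src_inv, hc']
    obtain ⟨hw, hpw⟩ := hact.act_vertex _ v hv hinv
    refine ⟨hinv, by rw [F.G.rng_inv, hc], ?_⟩
    refine (hact.map_eq_iff_map_act_eq hp hψ hψr hr hw hv ?_ hc).2 ?_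
    · rw [hpw, F.G.rng_inv]
    · rw [hact.act_act_inv hv hc', hcv]

/-- `Sg` itself, as the quotient of `Ω` by the stabiliser of `ψ v`. -/
noncomputable def SubgroupQuotientData.ofCovering (hp : IsUniversalCovering Ω Λ p)
    (hact : CorrespondingAction Ω Λ F p act) (hv : Ω.IsVertex v) (hpv : p v = x)
    (hr : IsCovering Sg Λ r) (hSg : Sg.Connected) (hψ : IsKGraphHomFun Ω Sg ψ)
    (hψr : ∀ e, r (ψ e) = p e) : SubgroupQuotientData Λ Ω F p act x v where
  H := {c | F.G.src c = F.i x ∧ F.G.rng c = F.i x ∧ ψ (act c v) = ψ v}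
  subgroup := isSubgroupAt_stabilizer hp.1 hact hv hpv hr hψ hψr
  ract := rightAct Ω p F act v
  ract_spec lam c a hc ha hav := by
    subst hpv
    exact rightAct_spec hp hact hv hc.1 hc.2.1 ha hav
  Qc := A''
  Q := Sg
  qmap := ψ
  qmap_hom := hψ
  qmap_surj := hp.1.surjective_of_map hr hψ hψr hSg hv
  qmap_fib a b := by
    subst hpv
    constructor
    · intro h
      obtain ⟨c, hc, hc', hcb⟩ :=
        exists_rightAct_eq hp hact hv (a := a) (b := b) (by rw [← hψr a, h, hψr])
      refine ⟨c, ⟨hc, hc', ?_⟩, hcb⟩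
      rw [← map_rightAct_eq_iff hp hact hv hr hψ hψr a hc hc', hcb, h]
    · rintro ⟨c, ⟨hc, hc', hcv⟩, rfl⟩
      exact ((map_rightAct_eq_iff hp hact hv hr hψ hψr a hc hc').2 hcv).symm
  qbar := r
  qbar_hom := hr.hom
  qbar_comm := hψr

end Classification

theorem universal_quotient_classification_general {k : ℕ} {A A' : Type}
    (Λ : KGraphStruct k A) (Ω : KGraphStruct k A')
    (p : A' → A) (hp : IsUniversalCovering Ω Λ p)
    (x : A) (v : A') (hv : Ω.IsVertex v) (hpv : p v = x)
    (FΛ : FundamentalGroupoid Λ)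
    (act : FΛ.B → A' → A') (hact : CorrespondingAction Ω Λ FΛ p act)
    (D : SubgroupQuotientData Λ Ω FΛ p act x v) :
    -- the canonical action of `H` on `(Ω,p)` is free
    (∀ w c, Ω.IsVertex w → c ∈ D.H → D.ract w c = w → c = FΛ.i x) ∧
    -- the associated covering `Ω/H → Λ` is a connected covering
    IsCovering D.Q Λ D.qbar ∧ D.Q.Connected ∧
    -- `H = q₊ π(Ω/H, vH)`
    (∀ (FQ : FundamentalGroupoid D.Q) (qst : FQ.B → FΛ.B),
      IsGpdHomFun FQ.G FΛ.G qst → (∀ a, qst (FQ.i a) = FΛ.i (D.qbar a)) →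
      D.H = qst '' FQ.pi1 (D.qmap v)) ∧
    -- every connected covering of `Λ` is isomorphic to some `Ω/H → Λ`
    (∀ (A'' : Type) (Sg : KGraphStruct k A'') (r : A'' → A),
      IsCovering Sg Λ r → Sg.Connected →
      ∃ D' : SubgroupQuotientData Λ Ω FΛ p act x v,
        ∃ φ : A'' → D'.Qc, Function.Bijective φ ∧ IsKGraphHomFun Sg D'.Q φ ∧
          ∀ a, D'.qbar (φ a) = r a) := by
  refine ⟨fun w c hw hc => D.eq_of_ract_eq_self hp hact hv hpv hw hc,
    D.isCovering_qbar hp hact hv hpv, hp.2.1.of_surjective D.qmap_hom D.qmap_surj,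
    fun FQ qst hqst hqsti => D.H_eq_image_pi1 hp hact hv hpv FQ hqst hqsti,
    fun A'' Sg r hr hSg => ?_⟩
  obtain ⟨ψ, hψ, hψr⟩ := hp.2.2 A'' Sg r hr hSg
  exact ⟨.ofCovering hp hact hv hpv hr hSg hψ hψr, id, Function.bijective_id,
    ⟨fun _ => rfl, fun _ => rfl, fun _ _ _ => rfl, fun _ => rfl⟩, fun _ => rfl⟩

/-- Let `p : Ω → Λ` be a universal covering, `x ∈ Λ⁰`,
`v ∈ p⁻¹(x)`, and `H` a subgroup of `π(Λ,x)` acting canonically on `(Ω,p)`.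
Then the action of `H` is free, the associated covering `q : Ω/H → Λ` is a
connected covering, `H = q₊π(Ω/H, vH)`, and moreover every connected covering
of `Λ` is isomorphic to such a covering `Ω/H → Λ`. -/
theorem universal_quotient_classification {k : ℕ} {A A' : Type}
    (Λ : KGraphStruct k A) (Ω : KGraphStruct k A')
    (p : A' → A) (hp : IsUniversalCovering Ω Λ p)
    (x : A) (hx : Λ.IsVertex x) (v : A') (hv : Ω.IsVertex v) (hpv : p v = x)
    (FΛ : FundamentalGroupoid Λ)
    (act : FΛ.B → A' → A') (hact : CorrespondingAction Ω Λ FΛ p act)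
    (D : SubgroupQuotientData Λ Ω FΛ p act x v) :
    -- the canonical action of `H` on `(Ω,p)` is free
    (∀ w c, Ω.IsVertex w → c ∈ D.H → D.ract w c = w → c = FΛ.i x) ∧
    -- the associated covering `Ω/H → Λ` is a connected covering
    IsCovering D.Q Λ D.qbar ∧ D.Q.Connected ∧
    -- `H = q₊ π(Ω/H, vH)`
    (∀ (FQ : FundamentalGroupoid D.Q) (qst : FQ.B → FΛ.B),
      IsGpdHomFun FQ.G FΛ.G qst → (∀ a, qst (FQ.i a) = FΛ.i (D.qbar a)) →
      D.H = qst '' FQ.pi1 (D.qmap v)) ∧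
    -- every connected covering of `Λ` is isomorphic to some `Ω/H → Λ`
    (∀ (A'' : Type) (Sg : KGraphStruct k A'') (r : A'' → A),
      IsCovering Sg Λ r → Sg.Connected →
      ∃ D' : SubgroupQuotientData Λ Ω FΛ p act x v,
        ∃ φ : A'' → D'.Qc, Function.Bijective φ ∧ IsKGraphHomFun Sg D'.Q φ ∧
          ∀ a, D'.qbar (φ a) = r a) :=
  universal_quotient_classification_general Λ Ω p hp x v hv hpv FΛ act hact D

end KGraphCovering
end

section
/- Let G be a group acting freely by k-graph automorphisms on the right of a k-graph Ω (free meaning that only the identity element of G fixes any vertex). Then the quotient set Ω/G of G-orbits becomes a k-graph with operations s(λG) = s(λ)G, r(λG) = r(λ)G, (λG)(μG) = (λμ)G (where representatives are adjusted within their orbits so as to be composable, the result being independent of the choices), and d(λG) = d(λ); and the quotient map Ω → Ω/G, λ ↦ λG, is a covering of k-graphs. -/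
namespace KGraphCovering

section QAux

variable {k : ℕ} {A : Type} {G : Type} [Group G]

private lemma qrel_equiv (act : A → G → A)
    (act_one : ∀ a, act a 1 = a)
    (act_mul : ∀ a g h, act (act a g) h = act a (g * h)) :
    Equivalence (fun a b : A => ∃ g : G, act a g = b) := by
  constructor
  · intro a; exact ⟨1, act_one a⟩
  · rintro a b ⟨g, rfl⟩
    exact ⟨g⁻¹, by rw [act_mul, mul_inv_cancel, act_one]⟩
  · rintro a b c ⟨g, rfl⟩ ⟨h, rfl⟩; exact ⟨g * h, (act_mul a g h).symm⟩

private lemma qmk_eq_iff (act : A → G → A)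
    (act_one : ∀ a, act a 1 = a)
    (act_mul : ∀ a g h, act (act a g) h = act a (g * h)) (a b : A) :
    Quot.mk (fun a b : A => ∃ g : G, act a g = b) a
      = Quot.mk (fun a b : A => ∃ g : G, act a g = b) b ↔ ∃ g : G, act a g = b :=
  Quot.eq.trans ((qrel_equiv act act_one act_mul).eqvGen_iff)

private lemma qfree_unique (Ω : KGraphStruct k A) (act : A → G → A)
    (act_one : ∀ a, act a 1 = a)
    (act_mul : ∀ a g h, act (act a g) h = act a (g * h))
    (hfree : ∀ v g, Ω.IsVertex v → act v g = v → g = 1)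
    {v : A} (hv : Ω.IsVertex v) {g h : G} (heq : act v g = act v h) : g = h := by
  have h1 : act v (g * h⁻¹) = v := by
    rw [← act_mul, heq, act_mul, mul_inv_cancel, act_one]
  exact mul_inv_eq_one.mp (hfree v _ hv h1)

/-- Guarded composition on representatives: translate `b` within its orbit so
it becomes composable with `a`, if possible. -/
private noncomputable def qcomp0 (Ω : KGraphStruct k A) (act : A → G → A) (a b : A) : A :=
  letI := Classical.propDecidable (∃ g : G, act (Ω.rng b) g = Ω.src a)
  if h : ∃ g : G, act (Ω.rng b) g = Ω.src a then Ω.comp a (act b h.choose) else a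

private lemma qcomp0_of_src_eq (Ω : KGraphStruct k A) (act : A → G → A)
    (act_one : ∀ a, act a 1 = a)
    (act_mul : ∀ a g h, act (act a g) h = act a (g * h))
    (hfree : ∀ v g, Ω.IsVertex v → act v g = v → g = 1)
    {a b : A} (h : Ω.src a = Ω.rng b) : qcomp0 Ω act a b = Ω.comp a b := by
  have hex : ∃ g : G, act (Ω.rng b) g = Ω.src a := ⟨1, by rw [act_one, h]⟩
  unfold qcomp0; rw [dif_pos hex]
  have hv : Ω.IsVertex (Ω.rng b) := Ω.src_rng b
  have h1 : hex.choose = (1 : G) :=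
    qfree_unique Ω act act_one act_mul hfree hv
      (by rw [hex.choose_spec, act_one, h])
  rw [h1, act_one]

private lemma qcomp0_act (Ω : KGraphStruct k A) (act : A → G → A)
    (act_one : ∀ a, act a 1 = a)
    (act_mul : ∀ a g h, act (act a g) h = act a (g * h))
    (act_src : ∀ a g, Ω.src (act a g) = act (Ω.src a) g)
    (act_rng : ∀ a g, Ω.rng (act a g) = act (Ω.rng a) g)
    (act_comp : ∀ a b g, Ω.src a = Ω.rng b →
      act (Ω.comp a b) g = Ω.comp (act a g) (act b g))
    (hfree : ∀ v g, Ω.IsVertex v → act v g = v → g = 1)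
    (a b : A) (g h : G) :
    qcomp0 Ω act (act a g) (act b h) = act (qcomp0 Ω act a b) g := by
  by_cases hex : ∃ g0 : G, act (Ω.rng b) g0 = Ω.src a
  · have hcalc : act (Ω.rng (act b h)) (h⁻¹ * (hex.choose * g)) = Ω.src (act a g) := by
      rw [act_rng, act_src, act_mul, ← mul_assoc, mul_inv_cancel, one_mul, ← act_mul,
        hex.choose_spec]
    have hex' : ∃ g0 : G, act (Ω.rng (act b h)) g0 = Ω.src (act a g) :=
      ⟨h⁻¹ * (hex.choose * g), hcalc⟩
    unfold qcomp0; rw [dif_pos hex', dif_pos hex]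
    have hv : Ω.IsVertex (Ω.rng (act b h)) := Ω.src_rng _
    have hch : hex'.choose = h⁻¹ * (hex.choose * g) :=
      qfree_unique Ω act act_one act_mul hfree hv (hex'.choose_spec.trans hcalc.symm)
    have hsrc : Ω.src a = Ω.rng (act b hex.choose) := by
      rw [act_rng, hex.choose_spec]
    rw [hch, act_mul, ← mul_assoc, mul_inv_cancel, one_mul, ← act_mul b hex.choose g,
      ← act_comp a (act b hex.choose) g hsrc]
  · have hex' : ¬ ∃ g0 : G, act (Ω.rng (act b h)) g0 = Ω.src (act a g) := by
      rintro ⟨g0, hg0⟩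
      refine hex ⟨h * g0 * g⁻¹, ?_⟩
      rw [act_rng, act_src] at hg0
      rw [← act_mul, ← act_mul, hg0, act_mul, mul_inv_cancel, act_one]
    unfold qcomp0; rw [dif_neg hex', dif_neg hex]

private lemma qtrans (Ω : KGraphStruct k A) (act : A → G → A)
    (act_one : ∀ a, act a 1 = a)
    (act_mul : ∀ a g h, act (act a g) h = act a (g * h))
    (act_rng : ∀ a g, Ω.rng (act a g) = act (Ω.rng a) g)
    {a b : A}
    (h : Quot.mk (fun a b : A => ∃ g : G, act a g = b) (Ω.src a)
      = Quot.mk (fun a b : A => ∃ g : G, act a g = b) (Ω.rng b)) :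
    ∃ b' : A, Quot.mk (fun a b : A => ∃ g : G, act a g = b) b
      = Quot.mk (fun a b : A => ∃ g : G, act a g = b) b' ∧ Ω.src a = Ω.rng b' := by
  obtain ⟨g, hg⟩ := (qmk_eq_iff act act_one act_mul _ _).mp h
  exact ⟨act b g⁻¹, Quot.sound ⟨g⁻¹, rfl⟩,
    by rw [act_rng, ← hg, act_mul, mul_inv_cancel, act_one]⟩

end QAux

end KGraphCovering

namespace KGraphCovering

/-- If a group `G` acts freely on the right of a `k`-graph
`Ω` by `k`-graph automorphisms (only the identity fixes a vertex), then the
quotient set `Ω/G` of `G`-orbits carries a `k`-graph structure with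
`s(λG) = s(λ)G`, `r(λG) = r(λ)G`, `(λG)(μG) = (λμ)G`, `d(λG) = d(λ)`, and the
quotient map `λ ↦ λG` is a covering of `k`-graphs.  (All the displayed
operations are the assertion that the quotient map is a `k`-graph morphism,
which is part of `IsCovering`.) -/
theorem quotient_by_free_action_is_covering {k : ℕ} {A : Type}
    (Ω : KGraphStruct k A) (G : Type) [Group G]
    (act : A → G → A)
    (act_one : ∀ a, act a 1 = a)
    (act_mul : ∀ a g h, act (act a g) h = act a (g * h))
    (act_src : ∀ a g, Ω.src (act a g) = act (Ω.src a) g)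
    (act_rng : ∀ a g, Ω.rng (act a g) = act (Ω.rng a) g)
    (act_comp : ∀ a b g, Ω.src a = Ω.rng b →
      act (Ω.comp a b) g = Ω.comp (act a g) (act b g))
    (act_deg : ∀ a g, Ω.deg (act a g) = Ω.deg a)
    (hfree : ∀ v g, Ω.IsVertex v → act v g = v → g = 1) :
    ∃ Q : KGraphStruct k (Quot (fun a b : A => ∃ g : G, act a g = b)),
      IsCovering Ω Q (Quot.mk (fun a b : A => ∃ g : G, act a g = b)) := by
  classical
  set R : A → A → Prop := fun a b : A => ∃ g : G, act a g = b with hR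
  have qiff : ∀ a b : A, Quot.mk R a = Quot.mk R b ↔ ∃ g : G, act a g = b :=
    qmk_eq_iff act act_one act_mul
  have hof : ∀ {a b : A}, Ω.src a = Ω.rng b → qcomp0 Ω act a b = Ω.comp a b :=
    fun {a b} h => qcomp0_of_src_eq Ω act act_one act_mul hfree h
  have hact : ∀ (a b : A) (g h : G),
      qcomp0 Ω act (act a g) (act b h) = act (qcomp0 Ω act a b) g :=
    qcomp0_act Ω act act_one act_mul act_src act_rng act_comp hfree
  have htr : ∀ {a b : A}, Quot.mk R (Ω.src a) = Quot.mk R (Ω.rng b) →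
      ∃ b' : A, Quot.mk R b = Quot.mk R b' ∧ Ω.src a = Ω.rng b' :=
    fun {a b} h => qtrans Ω act act_one act_mul act_rng h
  refine ⟨{
    src := Quot.lift (fun a => Quot.mk R (Ω.src a))
      (by rintro a b ⟨g, rfl⟩; exact Quot.sound ⟨g, (act_src a g).symm⟩)
    rng := Quot.lift (fun a => Quot.mk R (Ω.rng a))
      (by rintro a b ⟨g, rfl⟩; exact Quot.sound ⟨g, (act_rng a g).symm⟩)
    comp := Quot.lift₂ (fun a b => Quot.mk R (qcomp0 Ω act a b))
      (by rintro a b₁ b₂ ⟨h, rfl⟩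
          have h1 := hact a b₁ 1 h
          rw [act_one] at h1
          show Quot.mk R (qcomp0 Ω act a b₁) = Quot.mk R (qcomp0 Ω act a (act b₁ h))
          rw [h1, act_one])
      (by rintro a₁ a₂ b ⟨g, rfl⟩
          have h1 := hact a₁ b g 1
          rw [act_one] at h1
          show Quot.mk R (qcomp0 Ω act a₁ b) = Quot.mk R (qcomp0 Ω act (act a₁ g) b)
          rw [h1]
          exact Quot.sound ⟨g, rfl⟩)
    deg := Quot.lift Ω.deg (by rintro a b ⟨g, rfl⟩; exact (act_deg a g).symm)
    src_src := by
      refine Quot.ind fun a => ?_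
      exact congrArg (Quot.mk R) (Ω.src_src a)
    rng_src := by
      refine Quot.ind fun a => ?_
      exact congrArg (Quot.mk R) (Ω.rng_src a)
    src_rng := by
      refine Quot.ind fun a => ?_
      exact congrArg (Quot.mk R) (Ω.src_rng a)
    rng_rng := by
      refine Quot.ind fun a => ?_
      exact congrArg (Quot.mk R) (Ω.rng_rng a)
    comp_src_id := by
      refine Quot.ind fun a => ?_
      show Quot.mk R (qcomp0 Ω act a (Ω.src a)) = Quot.mk R a
      rw [hof (Ω.rng_src a).symm, Ω.comp_src_id]
    rng_comp_id := by
      refine Quot.ind fun a => ?_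
      show Quot.mk R (qcomp0 Ω act (Ω.rng a) a) = Quot.mk R a
      rw [hof (Ω.src_rng a), Ω.rng_comp_id]
    src_comp := by
      refine Quot.ind fun a => Quot.ind fun b => ?_
      intro h
      obtain ⟨b', hb, hsrc⟩ := htr h
      rw [hb]
      show Quot.mk R (Ω.src (qcomp0 Ω act a b')) = Quot.mk R (Ω.src b')
      rw [hof hsrc, Ω.src_comp a b' hsrc]
    rng_comp := by
      refine Quot.ind fun a => Quot.ind fun b => ?_
      intro h
      obtain ⟨b', hb, hsrc⟩ := htr h
      rw [hb]
      show Quot.mk R (Ω.rng (qcomp0 Ω act a b')) = Quot.mk R (Ω.rng a)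
      rw [hof hsrc, Ω.rng_comp a b' hsrc]
    assoc := by
      refine Quot.ind fun a => Quot.ind fun b => Quot.ind fun c => ?_
      intro h1 h2
      obtain ⟨b', hb, hsab⟩ := htr h1
      rw [hb] at h2 ⊢
      obtain ⟨c', hc, hsbc⟩ := htr h2
      rw [hc]
      show Quot.mk R (qcomp0 Ω act (qcomp0 Ω act a b') c')
        = Quot.mk R (qcomp0 Ω act a (qcomp0 Ω act b' c'))
      rw [hof hsab, hof hsbc,
        hof (by rw [Ω.src_comp a b' hsab]; exact hsbc),
        hof (by rw [Ω.rng_comp b' c' hsbc]; exact hsab),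
        Ω.assoc a b' c' hsab hsbc]
    deg_comp := by
      refine Quot.ind fun a => Quot.ind fun b => ?_
      intro h
      obtain ⟨b', hb, hsrc⟩ := htr h
      rw [hb]
      show Ω.deg (qcomp0 Ω act a b') = Ω.deg a + Ω.deg b'
      rw [hof hsrc]
      exact Ω.deg_comp a b' hsrc
    deg_src := by
      refine Quot.ind fun a => ?_
      exact Ω.deg_src a
    factor := by
      refine Quot.ind fun a => ?_
      intro m n hmn
      obtain ⟨⟨p, q⟩, ⟨hpq1, hpq2, hpq3, hpq4⟩, huniq⟩ := Ω.factor a m n hmn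
      refine ⟨(Quot.mk R p, Quot.mk R q),
        ⟨congrArg (Quot.mk R) hpq1, hpq2, hpq3, ?_⟩, ?_⟩
      · show Quot.mk R (qcomp0 Ω act p q) = Quot.mk R a
        rw [hof hpq1, hpq4]
      · rintro ⟨x, y⟩ hxy
        obtain ⟨p', rfl⟩ := Quot.exists_rep x
        obtain ⟨q', rfl⟩ := Quot.exists_rep y
        obtain ⟨h1, h2, h3, h4⟩ := hxy
        obtain ⟨q'', hq, hsrc⟩ := htr h1
        rw [hq] at h4
        have h4' : Quot.mk R (Ω.comp p' q'') = Quot.mk R a := by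
          rw [← hof hsrc]; exact h4
        obtain ⟨g, hg⟩ := (qiff _ _).mp h4'
        have hcomp : Ω.comp (act p' g) (act q'' g) = a := by
          rw [← act_comp _ _ _ hsrc, hg]
        have hdq : Ω.deg q'' = n := by
          obtain ⟨g', rfl⟩ := (qiff _ _).mp hq
          rw [act_deg]; exact h3
        have hpair := huniq (act p' g, act q'' g)
          ⟨by rw [act_src, act_rng, hsrc], by rw [act_deg]; exact h2,
            by rw [act_deg]; exact hdq, hcomp⟩
        have hp : act p' g = p := congrArg Prod.fst hpair
        have hq2 : act q'' g = q := congrArg Prod.snd hpair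
        refine Prod.ext ?_ ?_
        · show Quot.mk R p' = Quot.mk R p
          rw [← hp]; exact Quot.sound ⟨g, rfl⟩
        · show Quot.mk R q' = Quot.mk R q
          rw [hq, ← hq2]
          exact Quot.sound ⟨g, rfl⟩ }, ?_⟩
  refine { hom := ⟨fun a => rfl, fun a => rfl, ?_, fun a => rfl⟩,
           surj := fun q => Quot.exists_rep q,
           src_inj := ?_, src_lift := ?_, rng_inj := ?_, rng_lift := ?_ }
  · intro a b h
    exact (congrArg (Quot.mk R) (hof h)).symm
  · intro a b hsrc hmk
    obtain ⟨g, rfl⟩ := (qiff a b).mp hmk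
    have hfix : act (Ω.src a) g = Ω.src a := by rw [← act_src]; exact hsrc.symm
    rw [hfree _ g (Ω.src_src a) hfix, act_one]
  · intro v hv
    refine Quot.ind fun b => ?_
    intro hb
    obtain ⟨g, hg⟩ := (qiff _ _).mp hb
    refine ⟨act b g, ?_, (Quot.sound ⟨g, rfl⟩).symm⟩
    rw [act_src, hg]
  · intro a b hrng hmk
    obtain ⟨g, rfl⟩ := (qiff a b).mp hmk
    have hfix : act (Ω.rng a) g = Ω.rng a := by rw [← act_rng]; exact hrng.symm
    rw [hfree _ g (Ω.src_rng a) hfix, act_one]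
  · intro v hv
    refine Quot.ind fun b => ?_
    intro hb
    obtain ⟨g, hg⟩ := (qiff _ _).mp hb
    refine ⟨act b g, ?_, (Quot.sound ⟨g, rfl⟩).symm⟩
    rw [act_rng, hg]


end KGraphCovering
end

section
/- Let p : Ω → Λ be a covering of k-graphs and (𝒢(Λ), i) a fundamental groupoid of Λ. Then there exists a unique action of 𝒢(Λ) on the vertex set Ω⁰ of Ω (with fibers V_x = p⁻¹(x) for vertices x of Λ) such that i(α)v = r(λ) whenever λ is a morphism of Ω with α = p(λ) and v = s(λ). -/
namespace KGraphCovering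

section ActionConstruction

variable {k : ℕ} {A A' : Type}

/-- `w` is a vertex of `Ω` lying in the fiber over `x`. -/
def Fib (Ω : KGraphStruct k A') (p : A' → A) (w : A') (x : A) : Prop :=
  Ω.src w = w ∧ p w = x

/-- An arrow of the auxiliary groupoid: a bijection from the fiber over `x`
to the fiber over `y`, extended by the identity off the fiber. -/
structure HArr (Λ : KGraphStruct k A) (Ω : KGraphStruct k A') (p : A' → A) :
    Type where
  x : A
  y : A
  f : A' → A'
  g : A' → A'
  hx : Λ.src x = x
  hy : Λ.src y = y
  hf : ∀ w, Fib Ω p w x → Fib Ω p (f w) y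
  hg : ∀ u, Fib Ω p u y → Fib Ω p (g u) x
  hf0 : ∀ w, ¬ Fib Ω p w x → f w = w
  hg0 : ∀ u, ¬ Fib Ω p u y → g u = u
  hgf : ∀ w, Fib Ω p w x → g (f w) = w
  hfg : ∀ u, Fib Ω p u y → f (g u) = u

variable {Λ : KGraphStruct k A} {Ω : KGraphStruct k A'} {p : A' → A}

theorem HArr.ext3 {a b : HArr Λ Ω p} (hx : a.x = b.x) (hy : a.y = b.y)
    (hfw : ∀ w, Fib Ω p w a.x → a.f w = b.f w) : a = b := by
  have hf : a.f = b.f := funext fun w => by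
    by_cases h : Fib Ω p w a.x
    · exact hfw w h
    · rw [a.hf0 w h, b.hf0 w (by rw [← hx]; exact h)]
  have hg : a.g = b.g := funext fun u => by
    by_cases h : Fib Ω p u a.y
    · have hub : Fib Ω p u b.y := by rw [← hy]; exact h
      have hw : Fib Ω p (b.g u) a.x := by rw [hx]; exact b.hg u hub
      have hbu : a.f (b.g u) = u := by rw [hf]; exact b.hfg u hub
      calc a.g u = a.g (a.f (b.g u)) := by rw [hbu]
        _ = b.g u := a.hgf _ hw
    · rw [a.hg0 u h, b.hg0 u (by rw [← hy]; exact h)]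
  cases a; cases b
  simp only at hx hy hf hg
  subst hx; subst hy; subst hf; subst hg
  rfl

/-- The identity arrow at a vertex `x`. -/
def idArr (Ω : KGraphStruct k A') (p : A' → A) (x : A) (hx : Λ.src x = x) :
    HArr Λ Ω p where
  x := x
  y := x
  f := fun w => w
  g := fun u => u
  hx := hx
  hy := hx
  hf := fun _ h => h
  hg := fun _ h => h
  hf0 := fun _ _ => rfl
  hg0 := fun _ _ => rfl
  hgf := fun _ _ => rfl
  hfg := fun _ _ => rfl

open Classical in
/-- Composition of composable arrows. -/
noncomputable def compArr (a b : HArr Λ Ω p) (h : b.y = a.x) : HArr Λ Ω p where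
  x := b.x
  y := a.y
  f := fun w => if _ : Fib Ω p w b.x then a.f (b.f w) else w
  g := fun u => if _ : Fib Ω p u a.y then b.g (a.g u) else u
  hx := b.hx
  hy := a.hy
  hf := fun w hw => by
    simp only [dif_pos hw]
    exact a.hf _ (by rw [← h]; exact b.hf w hw)
  hg := fun u hu => by
    simp only [dif_pos hu]
    exact b.hg _ (by rw [h]; exact a.hg u hu)
  hf0 := fun w hw => dif_neg hw
  hg0 := fun u hu => dif_neg hu
  hgf := fun w hw => by
    have h1 : Fib Ω p (b.f w) a.x := by rw [← h]; exact b.hf w hw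
    simp only [dif_pos hw, dif_pos (a.hf _ h1)]
    rw [a.hgf _ h1, b.hgf w hw]
  hfg := fun u hu => by
    have h1 : Fib Ω p (a.g u) b.y := by rw [h]; exact a.hg u hu
    simp only [dif_pos hu, dif_pos (b.hg _ h1)]
    rw [b.hfg _ h1, a.hfg u hu]

/-- Inverse arrow. -/
def invArr (a : HArr Λ Ω p) : HArr Λ Ω p :=
  ⟨a.y, a.x, a.g, a.f, a.hy, a.hx, a.hg, a.hf, a.hg0, a.hf0, a.hfg, a.hgf⟩

@[simp] theorem idArr_x {Λ : KGraphStruct k A} {Ω : KGraphStruct k A'}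
    {p : A' → A} (x : A) (hx : Λ.src x = x) :
    (idArr Ω p x hx : HArr Λ Ω p).x = x := rfl

@[simp] theorem idArr_y {Λ : KGraphStruct k A} {Ω : KGraphStruct k A'}
    {p : A' → A} (x : A) (hx : Λ.src x = x) :
    (idArr Ω p x hx : HArr Λ Ω p).y = x := rfl

@[simp] theorem idArr_f {Λ : KGraphStruct k A} {Ω : KGraphStruct k A'}
    {p : A' → A} (x : A) (hx : Λ.src x = x) (w : A') :
    (idArr Ω p x hx : HArr Λ Ω p).f w = w := rfl

@[simp] theorem compArr_x (a b : HArr Λ Ω p) (h : b.y = a.x) :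
    (compArr a b h).x = b.x := rfl

@[simp] theorem compArr_y (a b : HArr Λ Ω p) (h : b.y = a.x) :
    (compArr a b h).y = a.y := rfl

open Classical in
theorem compArr_f (a b : HArr Λ Ω p) (h : b.y = a.x) (w : A')
    (hw : Fib Ω p w b.x) : (compArr a b h).f w = a.f (b.f w) := dif_pos hw

@[simp] theorem invArr_x (a : HArr Λ Ω p) : (invArr a).x = a.y := rfl
@[simp] theorem invArr_y (a : HArr Λ Ω p) : (invArr a).y = a.x := rfl
@[simp] theorem invArr_f (a : HArr Λ Ω p) (w : A') :
    (invArr a).f w = a.g w := rfl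

open Classical in
/-- The groupoid of fiber bijections. -/
noncomputable def HGpd (Λ : KGraphStruct k A) (Ω : KGraphStruct k A')
    (p : A' → A) : GroupoidStruct (HArr Λ Ω p) where
  src a := idArr Ω p a.x a.hx
  rng a := idArr Ω p a.y a.hy
  comp a b := if h : b.y = a.x then compArr a b h else b
  inv := invArr
  src_src _ := rfl
  rng_src _ := rfl
  src_rng _ := rfl
  rng_rng _ := rfl
  comp_src_id a := by
    beta_reduce
    rw [dif_pos (show (idArr Ω p a.x a.hx : HArr Λ Ω p).y = a.x from rfl)]
    refine HArr.ext3 rfl rfl fun w hw => ?_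
    have hw' : Fib Ω p w a.x := hw
    rw [compArr_f a (idArr Ω p a.x a.hx) rfl w hw', idArr_f]
  rng_comp_id a := by
    beta_reduce
    rw [dif_pos (show a.y = (idArr Ω p a.y a.hy : HArr Λ Ω p).x from rfl)]
    refine HArr.ext3 rfl rfl fun w hw => ?_
    have hw' : Fib Ω p w a.x := hw
    rw [compArr_f (idArr Ω p a.y a.hy) a rfl w hw', idArr_f]
  src_comp a b h := by
    beta_reduce at h ⊢
    have h' : b.y = a.x := (congrArg HArr.x h).symm
    rw [dif_pos h']
    rfl
  rng_comp a b h := by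
    beta_reduce at h ⊢
    have h' : b.y = a.x := (congrArg HArr.x h).symm
    rw [dif_pos h']
    rfl
  assoc f g h h1 h2 := by
    beta_reduce at h1 h2 ⊢
    have e1 : g.y = f.x := (congrArg HArr.x h1).symm
    have e2 : h.y = g.x := (congrArg HArr.x h2).symm
    rw [dif_pos e1, dif_pos e2, dif_pos (show h.y = (compArr f g e1).x from e2),
      dif_pos (show (compArr g h e2).y = f.x from e1)]
    refine HArr.ext3 rfl rfl fun w hw => ?_
    have hw' : Fib Ω p w h.x := hw
    have hfw : Fib Ω p (h.f w) g.x := by rw [← e2]; exact h.hf w hw'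
    rw [compArr_f (compArr f g e1) h e2 w hw', compArr_f f g e1 (h.f w) hfw,
      compArr_f f (compArr g h e2) e1 w hw', compArr_f g h e2 w hw']
  src_inv _ := rfl
  rng_inv _ := rfl
  inv_comp_self a := by
    beta_reduce
    rw [dif_pos (show a.y = (invArr a).x from rfl)]
    refine HArr.ext3 rfl rfl fun w hw => ?_
    have hw' : Fib Ω p w a.x := hw
    rw [compArr_f (invArr a) a rfl w hw', invArr_f, a.hgf w hw', idArr_f]
  comp_inv_self a := by
    beta_reduce
    rw [dif_pos (show (invArr a).y = a.x from rfl)]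
    refine HArr.ext3 rfl rfl fun w hw => ?_
    have hw' : Fib Ω p w a.y := hw
    rw [compArr_f a (invArr a) rfl w hw']
    show a.f ((invArr a).f w) = _
    rw [invArr_f, a.hfg w hw', idArr_f]

open Classical in
/-- The functor `Λ → HGpd` sending an arrow to "lift and take range". -/
noncomputable def FtoH (hp : IsCovering Ω Λ p) (lam : A) : HArr Λ Ω p where
  x := Λ.src lam
  y := Λ.rng lam
  f := fun w => if h : Fib Ω p w (Λ.src lam) then
    Ω.rng (Classical.choose (hp.src_lift w h.1 lam h.2.symm)) else w
  g := fun u => if h : Fib Ω p u (Λ.rng lam) then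
    Ω.src (Classical.choose (hp.rng_lift u h.1 lam h.2.symm)) else u
  hx := Λ.src_src lam
  hy := Λ.src_rng lam
  hf := fun w hw => by
    beta_reduce
    rw [dif_pos hw]
    obtain ⟨h1, h2⟩ := Classical.choose_spec (hp.src_lift w hw.1 lam hw.2.symm)
    exact ⟨Ω.src_rng _, by rw [hp.hom.2.1, h2]⟩
  hg := fun u hu => by
    beta_reduce
    rw [dif_pos hu]
    obtain ⟨h1, h2⟩ := Classical.choose_spec (hp.rng_lift u hu.1 lam hu.2.symm)
    exact ⟨Ω.src_src _, by rw [hp.hom.1, h2]⟩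
  hf0 := fun w hw => dif_neg hw
  hg0 := fun u hu => dif_neg hu
  hgf := fun w hw => by
    beta_reduce
    rw [dif_pos hw]
    obtain ⟨h1, h2⟩ := Classical.choose_spec (hp.src_lift w hw.1 lam hw.2.symm)
    have hfib : Fib Ω p (Ω.rng (Classical.choose (hp.src_lift w hw.1 lam hw.2.symm)))
        (Λ.rng lam) := ⟨Ω.src_rng _, by rw [hp.hom.2.1, h2]⟩
    rw [dif_pos hfib]
    obtain ⟨h3, h4⟩ := Classical.choose_spec (hp.rng_lift _ hfib.1 lam hfib.2.symm)
    rw [hp.rng_inj _ _ h3 (by rw [h4, h2]), h1]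
  hfg := fun u hu => by
    beta_reduce
    rw [dif_pos hu]
    obtain ⟨h1, h2⟩ := Classical.choose_spec (hp.rng_lift u hu.1 lam hu.2.symm)
    have hfib : Fib Ω p (Ω.src (Classical.choose (hp.rng_lift u hu.1 lam hu.2.symm)))
        (Λ.src lam) := ⟨Ω.src_src _, by rw [hp.hom.1, h2]⟩
    rw [dif_pos hfib]
    obtain ⟨h3, h4⟩ := Classical.choose_spec (hp.src_lift _ hfib.1 lam hfib.2.symm)
    rw [hp.src_inj _ _ h3 (by rw [h4, h2]), h1]

variable (hp : IsCovering Ω Λ p)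

@[simp] theorem FtoH_x (lam : A) : (FtoH hp lam).x = Λ.src lam := rfl
@[simp] theorem FtoH_y (lam : A) : (FtoH hp lam).y = Λ.rng lam := rfl

open Classical in
/-- Characterization of the forward map of `FtoH`: it sends the source of
any lift to the range of that lift. -/
theorem FtoH_f_eq (lam : A) (mu : A') (hmu : p mu = lam) :
    (FtoH hp lam).f (Ω.src mu) = Ω.rng mu := by
  have hfib : Fib Ω p (Ω.src mu) (Λ.src lam) :=
    ⟨Ω.src_src mu, by rw [hp.hom.1, hmu]⟩
  show (if h : Fib Ω p (Ω.src mu) (Λ.src lam) then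
    Ω.rng (Classical.choose (hp.src_lift _ h.1 lam h.2.symm)) else _) = _
  rw [dif_pos hfib]
  obtain ⟨h1, h2⟩ := Classical.choose_spec (hp.src_lift _ hfib.1 lam hfib.2.symm)
  rw [hp.src_inj _ _ h1 (by rw [h2, hmu]) ]

/-- `FtoH` sends vertices to identity arrows. -/
theorem FtoH_vertex (v : A) (hv : Λ.src v = v) :
    FtoH hp v = idArr Ω p v (by rw [← hv, Λ.src_src]) := by
  refine HArr.ext3 ?_ ?_ fun w hw => ?_
  · exact hv
  · show Λ.rng v = v
    rw [← hv]
    exact Λ.rng_src v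
  · have hw' : Fib Ω p w (Λ.src v) := hw
    have hwv : w = Ω.src w := hw'.1.symm
    have h5 : (FtoH hp v).f (Ω.src w) = Ω.rng w := by
      apply FtoH_f_eq
      rw [hw'.2, hv]
    rw [← hwv] at h5
    show (FtoH hp v).f w = w
    rw [h5]
    conv_lhs => rw [← hw'.1]
    rw [Ω.rng_src, hw'.1]

open Classical in
/-- `FtoH` is a functor to the groupoid `HGpd`. -/
theorem FtoH_functor : IsFunctorToGpdFun Λ (HGpd Λ Ω p) (FtoH hp) := by
  refine ⟨fun a => ?_, fun a => ?_, fun a b hab => ?_⟩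
  · rw [FtoH_vertex hp (Λ.src a) (Λ.src_src a)]
    rfl
  · rw [FtoH_vertex hp (Λ.rng a) (Λ.src_rng a)]
    show idArr Ω p (Λ.rng a) _ = idArr Ω p (FtoH hp a).y _
    rfl
  · show _ = (HGpd Λ Ω p).comp _ _
    have hyx : (FtoH hp b).y = (FtoH hp a).x := by
      rw [FtoH_x, FtoH_y, hab]
    show _ = if h : (FtoH hp b).y = (FtoH hp a).x then _ else _
    rw [dif_pos hyx]
    refine HArr.ext3 ?_ ?_ fun w hw => ?_
    · rw [FtoH_x, compArr_x, FtoH_x, Λ.src_comp a b hab]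
    · rw [FtoH_y, compArr_y, FtoH_y, Λ.rng_comp a b hab]
    · have hw' : Fib Ω p w (Λ.src b) := by
        rw [FtoH_x, Λ.src_comp a b hab] at hw; exact hw
      have hwb : Fib Ω p w (FtoH hp b).x := hw'
      -- lift b at w
      obtain ⟨h1, h2⟩ := Classical.choose_spec (hp.src_lift w hw'.1 b hw'.2.symm)
      set mu := Classical.choose (hp.src_lift w hw'.1 b hw'.2.symm) with hmu
      -- (FtoH b).f w = Ω.rng mu
      have hb : (FtoH hp b).f w = Ω.rng mu := by
        rw [← h1, FtoH_f_eq hp b mu h2]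
      have hfibr : Fib Ω p (Ω.rng mu) (Λ.src a) :=
        ⟨Ω.src_rng mu, by rw [hp.hom.2.1, h2, ← hab]⟩
      obtain ⟨h3, h4⟩ := Classical.choose_spec (hp.src_lift _ hfibr.1 a hfibr.2.symm)
      set nu := Classical.choose (hp.src_lift _ hfibr.1 a hfibr.2.symm) with hnu
      have ha : (FtoH hp a).f (Ω.rng mu) = Ω.rng nu := by
        rw [← h3, FtoH_f_eq hp a nu h4]
      have hsr : Ω.src nu = Ω.rng mu := h3
      have hcomp : p (Ω.comp nu mu) = Λ.comp a b := by
        rw [hp.hom.2.2.1 nu mu hsr, h4, h2]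
      have hsc : Ω.src (Ω.comp nu mu) = w := by
        rw [Ω.src_comp nu mu hsr, h1]
      have : (FtoH hp (Λ.comp a b)).f w = Ω.rng (Ω.comp nu mu) := by
        rw [← hsc, FtoH_f_eq hp _ _ hcomp]
      rw [this, compArr_f _ _ _ w hwb, hb, ha, Ω.rng_comp nu mu hsr]

variable (FΛ : FundamentalGroupoid Λ)

/-- The vertex of `Λ` corresponding to an object of the fundamental
groupoid. -/
noncomputable def vtx (e : FΛ.B) (he : FΛ.G.src e = e) : A :=
  Classical.choose (FΛ.obj_bij e he).exists

theorem vtx_vertex (e : FΛ.B) (he : FΛ.G.src e = e) :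
    Λ.src (vtx FΛ e he) = vtx FΛ e he :=
  (Classical.choose_spec (FΛ.obj_bij e he).exists).1

theorem vtx_i (e : FΛ.B) (he : FΛ.G.src e = e) : FΛ.i (vtx FΛ e he) = e :=
  (Classical.choose_spec (FΛ.obj_bij e he).exists).2

theorem vtx_eq (e : FΛ.B) (he : FΛ.G.src e = e) (v : A) (hv : Λ.src v = v)
    (hiv : FΛ.i v = e) : vtx FΛ e he = v :=
  (FΛ.obj_bij e he).unique ⟨vtx_vertex FΛ e he, vtx_i FΛ e he⟩ ⟨hv, hiv⟩

theorem i_src_vertex (v : A) (hv : Λ.src v = v) :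
    FΛ.G.src (FΛ.i v) = FΛ.i v := by
  rw [← FΛ.i_hom.1 v, hv]

theorem p_vertex (hp : IsCovering Ω Λ p) (w : A') (hw : Ω.src w = w) :
    Λ.src (p w) = p w := by
  rw [← hp.hom.1 w, hw]

section FromAction

variable (hp : IsCovering Ω Λ p) (act' : FΛ.B → A' → A')
  (h : CorrespondingAction Ω Λ FΛ p act')

open Classical in
/-- The functor `𝒢(Λ) → HGpd` induced by an arbitrary corresponding
action. -/
noncomputable def F2 (a : FΛ.B) : HArr Λ Ω p where
  x := vtx FΛ (FΛ.G.src a) (FΛ.G.src_src a)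
  y := vtx FΛ (FΛ.G.rng a) (FΛ.G.src_rng a)
  f := fun w => if _ : Fib Ω p w (vtx FΛ (FΛ.G.src a) (FΛ.G.src_src a)) then
    act' a w else w
  g := fun u => if _ : Fib Ω p u (vtx FΛ (FΛ.G.rng a) (FΛ.G.src_rng a)) then
    act' (FΛ.G.inv a) u else u
  hx := vtx_vertex FΛ _ _
  hy := vtx_vertex FΛ _ _
  hf := fun w hw => by
    beta_reduce
    rw [dif_pos hw]
    have hs : FΛ.G.src a = FΛ.i (p w) := by
      rw [hw.2, vtx_i]
    obtain ⟨h1, h2⟩ := h.act_vertex a w hw.1 hs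
    exact ⟨h1, (vtx_eq FΛ _ _ (p (act' a w)) (p_vertex hp _ h1) h2).symm⟩
  hg := fun u hu => by
    beta_reduce
    rw [dif_pos hu]
    have hs : FΛ.G.src (FΛ.G.inv a) = FΛ.i (p u) := by
      rw [FΛ.G.src_inv, hu.2, vtx_i]
    obtain ⟨h1, h2⟩ := h.act_vertex (FΛ.G.inv a) u hu.1 hs
    rw [FΛ.G.rng_inv] at h2
    exact ⟨h1, (vtx_eq FΛ _ _ (p (act' (FΛ.G.inv a) u)) (p_vertex hp _ h1) h2).symm⟩
  hf0 := fun w hw => dif_neg hw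
  hg0 := fun u hu => dif_neg hu
  hgf := fun w hw => by
    beta_reduce
    have hs : FΛ.G.src a = FΛ.i (p w) := by rw [hw.2, vtx_i]
    obtain ⟨h1, h2⟩ := h.act_vertex a w hw.1 hs
    have hfib2 : Fib Ω p (act' a w) (vtx FΛ (FΛ.G.rng a) (FΛ.G.src_rng a)) :=
      ⟨h1, (vtx_eq FΛ _ _ (p (act' a w)) (p_vertex hp _ h1) h2).symm⟩
    rw [dif_pos hw, dif_pos hfib2]
    have hcmp := h.act_comp (FΛ.G.inv a) a w hw.1 hs (FΛ.G.src_inv a)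
    rw [← hcmp, FΛ.G.inv_comp_self, hs]
    exact h.act_id w hw.1
  hfg := fun u hu => by
    beta_reduce
    have hs : FΛ.G.src (FΛ.G.inv a) = FΛ.i (p u) := by
      rw [FΛ.G.src_inv, hu.2, vtx_i]
    obtain ⟨h1, h2⟩ := h.act_vertex (FΛ.G.inv a) u hu.1 hs
    rw [FΛ.G.rng_inv] at h2
    have hfib2 : Fib Ω p (act' (FΛ.G.inv a) u)
        (vtx FΛ (FΛ.G.src a) (FΛ.G.src_src a)) :=
      ⟨h1, (vtx_eq FΛ _ _ (p (act' (FΛ.G.inv a) u)) (p_vertex hp _ h1) h2).symm⟩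
    rw [dif_pos hu, dif_pos hfib2]
    have hcmp := h.act_comp a (FΛ.G.inv a) u hu.1 hs (FΛ.G.rng_inv a).symm
    have hru : FΛ.G.rng a = FΛ.i (p u) := by rw [hu.2, vtx_i]
    rw [← hcmp, FΛ.G.comp_inv_self, hru]
    exact h.act_id u hu.1

open Classical in
theorem F2_f (a : FΛ.B) (w : A')
    (hw : Fib Ω p w (vtx FΛ (FΛ.G.src a) (FΛ.G.src_src a))) :
    (F2 FΛ hp act' h a).f w = act' a w := dif_pos hw

theorem F2_x (a : FΛ.B) :
    (F2 FΛ hp act' h a).x = vtx FΛ (FΛ.G.src a) (FΛ.G.src_src a) := rfl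

theorem F2_y (a : FΛ.B) :
    (F2 FΛ hp act' h a).y = vtx FΛ (FΛ.G.rng a) (FΛ.G.src_rng a) := rfl

/-- `F2` is a morphism of groupoids. -/
theorem F2_hom : IsGpdHomFun FΛ.G (HGpd Λ Ω p) (F2 FΛ hp act' h) := by
  classical
  refine ⟨fun a => ?_, fun a => ?_, fun a b hab => ?_⟩
  · -- F2 (src a) = HGpd.src (F2 a)
    show F2 FΛ hp act' h (FΛ.G.src a) = idArr Ω p (F2 FΛ hp act' h a).x _
    have hxx : vtx FΛ (FΛ.G.src (FΛ.G.src a)) (FΛ.G.src_src _)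
        = vtx FΛ (FΛ.G.src a) (FΛ.G.src_src a) :=
      vtx_eq FΛ _ _ _ (vtx_vertex FΛ _ _) (by rw [vtx_i, FΛ.G.src_src])
    refine HArr.ext3 ?_ ?_ fun w hw => ?_
    · exact hxx
    · show vtx FΛ (FΛ.G.rng (FΛ.G.src a)) (FΛ.G.src_rng _)
          = vtx FΛ (FΛ.G.src a) (FΛ.G.src_src a)
      exact vtx_eq FΛ _ _ _ (vtx_vertex FΛ _ _) (by rw [vtx_i, FΛ.G.rng_src])
    · have hw' : Fib Ω p w (vtx FΛ (FΛ.G.src (FΛ.G.src a)) (FΛ.G.src_src _)) := hw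
      rw [F2_f FΛ hp act' h (FΛ.G.src a) w hw', idArr_f]
      have hs : FΛ.i (p w) = FΛ.G.src a := by
        rw [hw'.2, hxx, vtx_i]
      rw [← hs]
      exact h.act_id w hw'.1
  · -- F2 (rng a) = HGpd.rng (F2 a)
    show F2 FΛ hp act' h (FΛ.G.rng a) = idArr Ω p (F2 FΛ hp act' h a).y _
    have hxx : vtx FΛ (FΛ.G.src (FΛ.G.rng a)) (FΛ.G.src_src _)
        = vtx FΛ (FΛ.G.rng a) (FΛ.G.src_rng a) :=
      vtx_eq FΛ _ _ _ (vtx_vertex FΛ _ _) (by rw [vtx_i, FΛ.G.src_rng])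
    refine HArr.ext3 ?_ ?_ fun w hw => ?_
    · exact hxx
    · show vtx FΛ (FΛ.G.rng (FΛ.G.rng a)) (FΛ.G.src_rng _)
          = vtx FΛ (FΛ.G.rng a) (FΛ.G.src_rng a)
      exact vtx_eq FΛ _ _ _ (vtx_vertex FΛ _ _) (by rw [vtx_i, FΛ.G.rng_rng])
    · have hw' : Fib Ω p w (vtx FΛ (FΛ.G.src (FΛ.G.rng a)) (FΛ.G.src_src _)) := hw
      rw [F2_f FΛ hp act' h (FΛ.G.rng a) w hw', idArr_f]
      have hs : FΛ.i (p w) = FΛ.G.rng a := by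
        rw [hw'.2, hxx, vtx_i]
      have hs2 : FΛ.i (p w) = FΛ.G.src (FΛ.G.rng a) := by
        rw [hs, FΛ.G.src_rng]
      rw [← FΛ.G.src_rng a, ← hs2]
      exact h.act_id w hw'.1
  · -- composition
    have hyx : (F2 FΛ hp act' h b).y = (F2 FΛ hp act' h a).x := by
      rw [F2_x, F2_y]
      exact vtx_eq FΛ _ _ _ (vtx_vertex FΛ _ _) (by rw [vtx_i, hab])
    show _ = (HGpd Λ Ω p).comp _ _
    show _ = if h' : (F2 FΛ hp act' h b).y = (F2 FΛ hp act' h a).x then _ else _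
    rw [dif_pos hyx]
    have hxc : vtx FΛ (FΛ.G.src (FΛ.G.comp a b)) (FΛ.G.src_src _)
        = vtx FΛ (FΛ.G.src b) (FΛ.G.src_src b) :=
      vtx_eq FΛ _ _ _ (vtx_vertex FΛ _ _)
        (by rw [vtx_i, FΛ.G.src_comp a b hab])
    refine HArr.ext3 ?_ ?_ fun w hw => ?_
    · exact hxc
    · show vtx FΛ (FΛ.G.rng (FΛ.G.comp a b)) (FΛ.G.src_rng _)
          = vtx FΛ (FΛ.G.rng a) (FΛ.G.src_rng a)
      exact vtx_eq FΛ _ _ _ (vtx_vertex FΛ _ _)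
        (by rw [vtx_i, FΛ.G.rng_comp a b hab])
    · have hw' : Fib Ω p w
          (vtx FΛ (FΛ.G.src (FΛ.G.comp a b)) (FΛ.G.src_src _)) := hw
      have hwb : Fib Ω p w (vtx FΛ (FΛ.G.src b) (FΛ.G.src_src b)) :=
        ⟨hw'.1, by rw [hw'.2, hxc]⟩
      have hsb : FΛ.G.src b = FΛ.i (p w) := by rw [hwb.2, vtx_i]
      obtain ⟨h1, h2⟩ := h.act_vertex b w hw'.1 hsb
      have hwa : Fib Ω p (act' b w) (vtx FΛ (FΛ.G.src a) (FΛ.G.src_src a)) :=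
        ⟨h1, (vtx_eq FΛ _ _ _ (p_vertex hp _ h1) (by rw [h2, hab])).symm⟩
      rw [F2_f FΛ hp act' h (FΛ.G.comp a b) w hw',
        compArr_f _ _ hyx w hwb, F2_f FΛ hp act' h b w hwb,
        F2_f FΛ hp act' h a _ hwa]
      exact h.act_comp a b w hw'.1 hsb hab
  
/-- `F2` extends the canonical functor composed with `FtoH`. -/
theorem F2_comm (lam : A) : F2 FΛ hp act' h (FΛ.i lam) = FtoH hp lam := by
  have hx0 : vtx FΛ (FΛ.G.src (FΛ.i lam)) (FΛ.G.src_src _) = Λ.src lam :=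
    vtx_eq FΛ _ _ _ (Λ.src_src lam) (FΛ.i_hom.1 lam)
  refine HArr.ext3 ?_ ?_ fun w hw => ?_
  · exact hx0
  · show vtx FΛ (FΛ.G.rng (FΛ.i lam)) (FΛ.G.src_rng _) = Λ.rng lam
    exact vtx_eq FΛ _ _ _ (Λ.src_rng lam) (FΛ.i_hom.2.1 lam)
  · have hw' : Fib Ω p w (vtx FΛ (FΛ.G.src (FΛ.i lam)) (FΛ.G.src_src _)) := hw
    have hws : Fib Ω p w (Λ.src lam) := ⟨hw'.1, by rw [hw'.2, hx0]⟩
    obtain ⟨h1, h2⟩ := Classical.choose_spec (hp.src_lift w hws.1 lam hws.2.symm)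
    set mu := Classical.choose (hp.src_lift w hws.1 lam hws.2.symm) with hmu
    rw [F2_f FΛ hp act' h (FΛ.i lam) w hw']
    have hr : (FtoH hp lam).f w = Ω.rng mu := by
      rw [← h1, FtoH_f_eq hp lam mu h2]
    rw [hr, ← h2, ← h1]
    exact h.act_cov mu

end FromAction

end ActionConstruction

/-- For a covering `p : Ω → Λ` there is a unique action of
the fundamental groupoid `𝒢(Λ)` on the vertex set of `Ω` (with fiber over a
vertex `x` of `Λ` equal to `p⁻¹(x)`) such that `i(α)·v = r(λ)` whenever
`α = p(λ)` and `v = s(λ)`.  (Uniqueness is as maps on the meaningful pairs.) -/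
theorem corresponding_action_exists_unique {k : ℕ} {A A' : Type}
    (Λ : KGraphStruct k A) (Ω : KGraphStruct k A')
    (p : A' → A) (hp : IsCovering Ω Λ p) (FΛ : FundamentalGroupoid Λ) :
    ∃ act : FΛ.B → A' → A',
      CorrespondingAction Ω Λ FΛ p act ∧
      ∀ act', CorrespondingAction Ω Λ FΛ p act' →
        ∀ a w, Ω.IsVertex w → FΛ.G.src a = FΛ.i (p w) → act' a w = act a w := by
  classical
  obtain ⟨F', ⟨hhom, hcomm⟩, huniq⟩ :=
    FΛ.univ (HGpd Λ Ω p) (FtoH hp) (FtoH_functor hp)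
  have hFx : ∀ a : FΛ.B, (F' a).x = vtx FΛ (FΛ.G.src a) (FΛ.G.src_src a) := by
    intro a
    have h1 : F' (FΛ.G.src a) = idArr Ω p (F' a).x (F' a).hx := hhom.1 a
    have h2 : F' (FΛ.i (vtx FΛ (FΛ.G.src a) (FΛ.G.src_src a)))
        = FtoH hp (vtx FΛ (FΛ.G.src a) (FΛ.G.src_src a)) := hcomm _
    rw [vtx_i, FtoH_vertex hp _ (vtx_vertex FΛ _ _)] at h2
    have h4 : vtx FΛ (FΛ.G.src a) (FΛ.G.src_src a) = (F' a).x :=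
      congrArg HArr.x (h2.symm.trans h1)
    exact h4.symm
  have hFy : ∀ a : FΛ.B, (F' a).y = vtx FΛ (FΛ.G.rng a) (FΛ.G.src_rng a) := by
    intro a
    have h1 : F' (FΛ.G.rng a) = idArr Ω p (F' a).y (F' a).hy := hhom.2.1 a
    have h2 : F' (FΛ.i (vtx FΛ (FΛ.G.rng a) (FΛ.G.src_rng a)))
        = FtoH hp (vtx FΛ (FΛ.G.rng a) (FΛ.G.src_rng a)) := hcomm _
    rw [vtx_i, FtoH_vertex hp _ (vtx_vertex FΛ _ _)] at h2
    have h4 : vtx FΛ (FΛ.G.rng a) (FΛ.G.src_rng a) = (F' a).y :=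
      congrArg HArr.y (h2.symm.trans h1)
    exact h4.symm
  have hfib : ∀ (a : FΛ.B) (w : A'), Ω.src w = w → FΛ.G.src a = FΛ.i (p w) →
      Fib Ω p w (vtx FΛ (FΛ.G.src a) (FΛ.G.src_src a)) := fun a w hw hs =>
    ⟨hw, (vtx_eq FΛ _ _ (p w) (p_vertex hp w hw) hs.symm).symm⟩
  refine ⟨fun a w => (F' a).f w, ⟨?_, ?_, ?_, ?_⟩, ?_⟩
  · -- act_vertex
    intro a w hw hs
    have hfw := (F' a).hf w (by rw [hFx]; exact hfib a w hw hs)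
    refine ⟨hfw.1, ?_⟩
    rw [hfw.2, hFy a, vtx_i]
  · -- act_id
    intro w hw
    rw [hcomm (p w), FtoH_vertex hp (p w) (p_vertex hp w hw), idArr_f]
  · -- act_comp
    intro a b w hw hsb hab
    have hyx : (F' b).y = (F' a).x := by
      rw [hFx a, hFy b]
      exact vtx_eq FΛ _ _ _ (vtx_vertex FΛ _ _) (by rw [vtx_i, hab])
    have hc : F' (FΛ.G.comp a b) = (HGpd Λ Ω p).comp (F' a) (F' b) :=
      hhom.2.2 a b hab
    rw [hc]
    show (if h' : (F' b).y = (F' a).x then compArr (F' a) (F' b) h'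
      else F' b).f w = _
    rw [dif_pos hyx]
    have hwb : Fib Ω p w (F' b).x := by rw [hFx b]; exact hfib b w hw hsb
    rw [compArr_f _ _ hyx w hwb]
  · -- act_cov
    intro lam
    rw [hcomm (p lam)]
    exact FtoH_f_eq hp (p lam) lam rfl
  · -- uniqueness
    intro act' hact' a w hw hs
    have hF2 : F2 FΛ hp act' hact' = F' :=
      huniq (F2 FΛ hp act' hact')
        ⟨F2_hom FΛ hp act' hact', F2_comm FΛ hp act' hact'⟩
    have hwf : Fib Ω p w (vtx FΛ (FΛ.G.src a) (FΛ.G.src_src a)) :=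
      hfib a w hw hs
    rw [← hF2]
    exact (F2_f FΛ hp act' hact' a w hwf).symm

end KGraphCovering
end
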